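/- arXiv:1511.07020 — 6 statements merged into one kernel-verified Lean document; each statement's English description precedes it below -/
import Mathlib

section
/- Let w ∈ ℝⁿ with w > 0 componentwise, let W = diag(w₁,…,wₙ), and let L = A W Aᵀ (which is invertible since A has full row rank). Then for every index i ∈ {1,…,n}, the vector p solving L p = aᵢ (where aᵢ is the i-th column of A) satisfies ‖Aᵀ p‖_∞ ≤ 𝒟 / wᵢ, where 𝒟 = max{|det A'| : A' is a square submatrix of A}. -/
open Matrix Filter Set Topology

/-- The real matrix obtained from an integer matrix by coercion of entries. -/
noncomputable def rmat {m n : ℕ} (A : Matrix (Fin m) (Fin n) ℤ) :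
    Matrix (Fin m) (Fin n) ℝ :=
  A.map (Int.cast : ℤ → ℝ)

/-- The diagonal matrix `W = diag (x i / c i)`. -/
noncomputable def physW {n : ℕ} (c x : Fin n → ℝ) : Matrix (Fin n) (Fin n) ℝ :=
  Matrix.diagonal (fun i => x i / c i)

/-- The Physarum vector `q = W Aᵀ L⁻¹ b` where `L = A W Aᵀ`. -/
noncomputable def physQ {m n : ℕ} (B : Matrix (Fin m) (Fin n) ℝ) (b : Fin m → ℝ)
    (c x : Fin n → ℝ) : Fin n → ℝ :=
  physW c x *ᵥ (Bᵀ *ᵥ ((B * physW c x * Bᵀ)⁻¹ *ᵥ b))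

/-- The set of absolute values of determinants of square submatrices of `A` (as reals). -/
def subdets {m n : ℕ} (A : Matrix (Fin m) (Fin n) ℤ) : Set ℝ :=
  {d | ∃ (k : ℕ) (f : Fin k → Fin m) (g : Fin k → Fin n),
    Function.Injective f ∧ Function.Injective g ∧
    d = |((A.submatrix f g).det : ℝ)|}

/-- `x` is a solution of the Physarum dynamics `ẋ = q - x` on the time set `s`,
staying in the positive orthant. -/
def IsPhysSolOn {m n : ℕ} (B : Matrix (Fin m) (Fin n) ℝ) (b : Fin m → ℝ)
    (c : Fin n → ℝ) (x : ℝ → Fin n → ℝ) (s : Set ℝ) : Prop :=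
  ∀ t ∈ s, (∀ i, 0 < x t i) ∧ HasDerivWithinAt x (physQ B b c (x t) - x t) s t

/-! By Cramer's rule `det L · (Aᵀp)_j = a_jᵀ adj(L) a_i`. The Cauchy–Binet formula, summed over
all maps `g : Fin m → Fin n` (which costs the same factor `m!` on both sides), expands
`m! · det L = ∑_g w_g det(A_g)²` and
`m! · w_i · a_jᵀ adj(L) a_i = ∑_g w_g det(A_g) ∑_{k : g k = i} det(A_{g[k ↦ j]})`,
where `w_g = ∏_k w_{g k}` and `A_g` has columns `a_{g k}`. Only injective `g` contribute; then the
inner sum has at most one term, of absolute value at most `𝒟`, and `|det A_g| ≤ det(A_g)²` because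
`A` is integral. So the second sum is at most `𝒟` times the first, and `det L > 0` as `L` is positive definite. -/

namespace Matrix

theorem vecMul_injective_of_rank_eq {K m n : Type*} [Field K] [Fintype m] [Fintype n]
    {M : Matrix m n K} (h : M.rank = Fintype.card m) : Function.Injective M.vecMul := by
  rw [vecMul_injective_iff, linearIndependent_iff_card_eq_finrank_span, Set.finrank,
    ← rank_eq_finrank_span_row, h]

variable {R : Type*} [CommRing R] {ι κ : Type*} [Fintype ι] [DecidableEq ι]

theorem dotProduct_cramer_comm (A : Matrix ι ι R) (u v : ι → R) :
    u ⬝ᵥ cramer A v = v ⬝ᵥ cramer Aᵀ u := by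
  rw [cramer_eq_adjugate_mulVec, cramer_eq_adjugate_mulVec, dotProduct_mulVec,
    ← adjugate_transpose, mulVec_transpose, dotProduct_comm]

theorem mul_det_updateCol_mul_diagonal (B : Matrix ι κ R) (w : κ → R) (g : ι → κ) (k : ι)
    (j : κ) :
    w (g k) * ((B.submatrix id g * diagonal (w ∘ g)).updateCol k (Bᵀ j)).det
      = (∏ l, w (g l)) * (B.submatrix id (Function.update g k j)).det := by
  have hcol : (B.submatrix id g * diagonal (w ∘ g)).updateCol k (w (g k) • Bᵀ j)
      = B.submatrix id (Function.update g k j) * diagonal (w ∘ g) := by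
    ext r l
    by_cases hl : l = k
    · subst hl
      simp [mul_comm]
    · simp [updateCol_ne hl, Function.update_of_ne hl]
  rw [← det_updateCol_smul, hcol, det_mul, det_diagonal, mul_comm]
  rfl

theorem mul_single_dotProduct_cramer [DecidableEq κ] (B : Matrix ι κ R) (w : κ → R)
    (g : ι → κ) (i j : κ) :
    w i * ((Pi.single i 1 ∘ g) ⬝ᵥ cramer (B.submatrix id g * diagonal (w ∘ g)) (Bᵀ j))
      = (∏ l, w (g l)) * ∑ k with g k = i, (B.submatrix id (Function.update g k j)).det := by
  simp only [dotProduct, Function.comp_apply, Pi.single_apply, ite_mul, one_mul, zero_mul,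
    ← Finset.sum_filter, Finset.mul_sum, cramer_apply]
  refine Finset.sum_congr rfl fun k hk => ?_
  rw [← (Finset.mem_filter.1 hk).2, mul_det_updateCol_mul_diagonal]

theorem det_submatrix_eq_zero_of_not_injective (P : Matrix ι κ R) {g : ι → κ}
    (hg : ¬Function.Injective g) : (P.submatrix id g).det = 0 := by
  obtain ⟨a, b, hab, hne⟩ := Function.not_injective_iff.1 hg
  exact det_zero_of_column_eq hne fun k => by simp [hab]

variable [Fintype κ]

theorem det_mul_eq_sum_det_submatrix_mul_prod (P : Matrix ι κ R) (Q : Matrix κ ι R) :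
    (P * Q).det = ∑ h : ι → κ, (P.submatrix id h).det * ∏ k, Q (h k) k := by
  simp only [det_apply, mul_apply, Finset.prod_univ_sum, Fintype.piFinset_univ, Finset.smul_sum,
    Finset.sum_mul, submatrix_apply, id, Finset.prod_mul_distrib, smul_mul_assoc]
  exact Finset.sum_comm

/-- Cauchy–Binet formula: non-injective `h` contribute `0`, and each set of `card ι` columns is
the image of `(card ι)!` injective maps `h`. -/
theorem factorial_card_mul_det_mul (P : Matrix ι κ R) (Q : Matrix κ ι R) :
    ((Fintype.card ι).factorial : R) * (P * Q).det
      = ∑ h : ι → κ, (P.submatrix id h).det * (Q.submatrix h id).det := by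
  calc ((Fintype.card ι).factorial : R) * (P * Q).det
      = ∑ σ : Equiv.Perm ι, ∑ h : ι → κ, (P.submatrix id h).det * ∏ k, Q (h k) k := by
        rw [Finset.sum_const, Finset.card_univ, Fintype.card_perm, nsmul_eq_mul,
          det_mul_eq_sum_det_submatrix_mul_prod]
    _ = ∑ σ : Equiv.Perm ι, ∑ h : ι → κ,
          (P.submatrix id (h ∘ σ)).det * ∏ k, Q (h (σ k)) k := by
        refine Finset.sum_congr rfl fun σ _ => ?_
        exact (Equiv.sum_comp (Equiv.arrowCongr σ.symm (Equiv.refl κ))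
          (fun h => (P.submatrix id h).det * ∏ k, Q (h k) k)).symm
    _ = ∑ h : ι → κ, (P.submatrix id h).det * ∑ σ : Equiv.Perm ι,
          Equiv.Perm.sign σ • ∏ k, Q (h (σ k)) k := by
        rw [Finset.sum_comm]
        refine Finset.sum_congr rfl fun h _ => ?_
        rw [Finset.mul_sum]
        refine Finset.sum_congr rfl fun σ _ => ?_
        rw [show P.submatrix id (h ∘ σ) = (P.submatrix id h).submatrix id σ from rfl,
          det_permute', Units.smul_def, zsmul_eq_mul]
        ring
    _ = ∑ h : ι → κ, (P.submatrix id h).det * (Q.submatrix h id).det := by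
        simp only [det_apply, submatrix_apply, id]

theorem factorial_card_smul_cramer_mul (P : Matrix ι κ R) (Q : Matrix κ ι R) (v : κ → R) :
    ((Fintype.card ι).factorial : R) • cramer (P * Q) (P *ᵥ v)
      = ∑ h : ι → κ, (P.submatrix id h).det • cramer (Q.submatrix h id) (v ∘ h) := by
  ext r
  simp only [Pi.smul_apply, Finset.sum_apply, cramer_apply, smul_eq_mul, ← mul_updateCol,
    factorial_card_mul_det_mul]
  rfl

variable [DecidableEq κ] (B : Matrix ι κ R) (w : κ → R)

theorem submatrix_diagonal_mul_transpose (g : ι → κ) :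
    (diagonal w * Bᵀ).submatrix g id = (B.submatrix id g * diagonal (w ∘ g))ᵀ := by
  ext k r
  simp [diagonal_mul, mul_diagonal, mul_comm]

theorem factorial_card_mul_det_mul_diagonal_mul_transpose :
    ((Fintype.card ι).factorial : R) * (B * diagonal w * Bᵀ).det
      = ∑ g : ι → κ, (∏ k, w (g k)) * (B.submatrix id g).det ^ 2 := by
  rw [Matrix.mul_assoc, factorial_card_mul_det_mul]
  refine Finset.sum_congr rfl fun g _ => ?_
  rw [submatrix_diagonal_mul_transpose, det_transpose, det_mul, det_diagonal]
  simp only [Function.comp_apply]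
  ring

theorem factorial_card_mul_dotProduct_adjugate_mulVec (i j : κ) :
    ((Fintype.card ι).factorial : R) * w i
        * (Bᵀ j ⬝ᵥ (adjugate (B * diagonal w * Bᵀ) *ᵥ Bᵀ i))
      = ∑ g : ι → κ, (∏ k, w (g k)) * ((B.submatrix id g).det
          * ∑ k with g k = i, (B.submatrix id (Function.update g k j)).det) := by
  rw [← cramer_eq_adjugate_mulVec, Matrix.mul_assoc,
    show Bᵀ i = B *ᵥ Pi.single i 1 from (mulVec_single_one B i).symm]
  calc _ = w i * (Bᵀ j ⬝ᵥ ((Fintype.card ι).factorial : R)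
          • cramer (B * (diagonal w * Bᵀ)) (B *ᵥ Pi.single i 1)) := by
        rw [dotProduct_smul, smul_eq_mul]
        ring
    _ = _ := by
        rw [factorial_card_smul_cramer_mul, dotProduct_sum, Finset.mul_sum]
        refine Finset.sum_congr rfl fun g _ => ?_
        rw [dotProduct_smul, smul_eq_mul, dotProduct_cramer_comm,
          submatrix_diagonal_mul_transpose, transpose_transpose, mul_left_comm,
          mul_single_dotProduct_cramer]
        ring

end Matrix

section IntegerMatrix

variable {m n : ℕ} {A : Matrix (Fin m) (Fin n) ℤ} {𝒟 : ℝ}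

theorem det_rmat_submatrix (g : Fin m → Fin n) :
    ((rmat A).submatrix id g).det = ((A.submatrix id g).det : ℝ) := by
  rw [Int.cast_det]
  rfl

theorem abs_det_rmat_submatrix_le_sq (g : Fin m → Fin n) :
    |((rmat A).submatrix id g).det| ≤ ((rmat A).submatrix id g).det ^ 2 := by
  rw [det_rmat_submatrix]
  exact_mod_cast (Int.le_self_sq _).trans_eq (sq_abs _)

theorem nonneg_of_isGreatest_subdets (hD : IsGreatest (subdets A) 𝒟) : 0 ≤ 𝒟 := by
  obtain ⟨k, f, g, -, -, hd⟩ := hD.1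
  exact hd ▸ abs_nonneg _

theorem abs_det_rmat_submatrix_le (hD : IsGreatest (subdets A) 𝒟) (g : Fin m → Fin n) :
    |((rmat A).submatrix id g).det| ≤ 𝒟 := by
  by_cases hg : Function.Injective g
  · exact hD.2 ⟨m, id, g, Function.injective_id, hg, by rw [det_rmat_submatrix]⟩
  · rw [det_submatrix_eq_zero_of_not_injective _ hg, abs_zero]
    exact nonneg_of_isGreatest_subdets hD

theorem abs_det_mul_sum_det_update_le (hD : IsGreatest (subdets A) 𝒟) (g : Fin m → Fin n)
    (i j : Fin n) :
    |((rmat A).submatrix id g).det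
        * ∑ k with g k = i, ((rmat A).submatrix id (Function.update g k j)).det|
      ≤ 𝒟 * ((rmat A).submatrix id g).det ^ 2 := by
  by_cases hg : Function.Injective g
  · have hcard : (Finset.univ.filter fun k => g k = i).card ≤ 1 :=
      Finset.card_le_one.2 fun a ha b hb =>
        hg ((Finset.mem_filter.1 ha).2.trans (Finset.mem_filter.1 hb).2.symm)
    have hsum : |∑ k with g k = i, ((rmat A).submatrix id (Function.update g k j)).det| ≤ 𝒟 :=
      calc _ ≤ ∑ k with g k = i, |((rmat A).submatrix id (Function.update g k j)).det| :=
            Finset.abs_sum_le_sum_abs _ _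
        _ ≤ (Finset.univ.filter fun k => g k = i).card • 𝒟 :=
            Finset.sum_le_card_nsmul _ _ _ fun k _ => abs_det_rmat_submatrix_le hD _
        _ ≤ 𝒟 := by
            rw [nsmul_eq_mul]
            exact mul_le_of_le_one_left (nonneg_of_isGreatest_subdets hD) (by exact_mod_cast hcard)
    rw [abs_mul, mul_comm 𝒟]
    exact mul_le_mul (abs_det_rmat_submatrix_le_sq g) hsum (abs_nonneg _) (sq_nonneg _)
  · simp [det_submatrix_eq_zero_of_not_injective _ hg]

theorem abs_sum_prod_mul_det_mul_sum_det_update_le (hD : IsGreatest (subdets A) 𝒟)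
    {w : Fin n → ℝ} (hw : ∀ i, 0 < w i) (i j : Fin n) :
    |∑ g : Fin m → Fin n, (∏ k, w (g k)) * (((rmat A).submatrix id g).det
        * ∑ k with g k = i, ((rmat A).submatrix id (Function.update g k j)).det)|
      ≤ 𝒟 * ∑ g : Fin m → Fin n, (∏ k, w (g k)) * ((rmat A).submatrix id g).det ^ 2 := by
  rw [Finset.mul_sum]
  refine (Finset.abs_sum_le_sum_abs _ _).trans (Finset.sum_le_sum fun g _ => ?_)
  have hprod : 0 < ∏ k, w (g k) := Finset.prod_pos fun k _ => hw (g k)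
  rw [abs_mul, abs_of_pos hprod, mul_left_comm]
  exact mul_le_mul_of_nonneg_left (abs_det_mul_sum_det_update_le hD g i j) hprod.le

end IntegerMatrix

theorem subdet_bound_on_column_solution {m n : ℕ} (A : Matrix (Fin m) (Fin n) ℤ)
    (hrank : (rmat A).rank = m)
    (𝒟 : ℝ) (hD : IsGreatest (subdets A) 𝒟)
    (w : Fin n → ℝ) (hw : ∀ i, 0 < w i)
    (i : Fin n) (p : Fin m → ℝ)
    (hp : (rmat A * Matrix.diagonal w * (rmat A)ᵀ) *ᵥ p = (rmat A)ᵀ i) :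
    ∀ j, |((rmat A)ᵀ *ᵥ p) j| ≤ 𝒟 / w i := by
  intro j
  set B := rmat A
  set L := B * diagonal w * Bᵀ
  have hL : 0 < L.det := by
    have hB : Function.Injective B.vecMul :=
      vecMul_injective_of_rank_eq (by rwa [Fintype.card_fin])
    simpa using ((posDef_diagonal_iff.2 hw).mul_mul_conjTranspose_same hB).det_pos
  have hcramer : L.det * (Bᵀ *ᵥ p) j = Bᵀ j ⬝ᵥ (adjugate L *ᵥ Bᵀ i) := by
    rw [← hp, mulVec_mulVec, adjugate_mul, smul_mulVec, one_mulVec, dotProduct_smul]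
    rfl
  have hadjL := factorial_card_mul_dotProduct_adjugate_mulVec B w i j
  have hdetL := factorial_card_mul_det_mul_diagonal_mul_transpose B w
  rw [Fintype.card_fin] at hadjL hdetL
  have key : (m.factorial * L.det) * (w i * |(Bᵀ *ᵥ p) j|) ≤ (m.factorial * L.det) * 𝒟 := by
    calc _ = |m.factorial * w i * (Bᵀ j ⬝ᵥ (adjugate L *ᵥ Bᵀ i))| := by
          rw [← hcramer, abs_mul, abs_mul, abs_mul, abs_of_pos (hw i), abs_of_pos hL,
            Nat.abs_cast]
          ring
      _ ≤ 𝒟 * (m.factorial * L.det) := by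
          rw [hadjL, hdetL]
          exact abs_sum_prod_mul_det_mul_sum_det_update_le hD hw i j
      _ = _ := mul_comm _ _
  rw [le_div_iff₀ (hw i), mul_comm]
  exact le_of_mul_le_mul_left key (by positivity)
end

section
/- Suppose the feasible region {x ∈ ℝⁿ : A x = b, x ≥ 0} is nonempty. Then for every x ∈ ℝⁿ with x > 0 componentwise, the vector q = W Aᵀ L⁻¹ b (where W = diag(x₁/c₁,…,xₙ/cₙ) and L = A W Aᵀ) satisfies ‖q‖_∞ ≤ 𝒟² · n · ‖b‖₁, where 𝒟 = max{|det A'| : A' is a square submatrix of A}. -/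
open Matrix Filter Set Topology

/-!
By Cauchy–Binet, `m! · det L = ∑_ψ w^ψ · det(A_ψ)²` over all column selections `ψ : Fin m → Fin n`
(`A_ψ` is the square submatrix on the columns `ψ`, and `w^ψ = ∏ₗ x_{ψ l} / c_{ψ l} ≥ 0`), so
`det L ≥ 0`.
By the matrix determinant lemma, `det L · qᵢ` is the change of `det L` when `b` is added to the
`i`-th column of `A`, and Cauchy–Binet again gives
`m! · det L · qᵢ = ∑_ψ w^ψ · det(A_ψ) · det(A_ψ with column ψ⁻¹(i) replaced by b)`.
Laplace expansion bounds the last determinant by `𝒟 ‖b‖₁`, and `|det A_ψ| ≤ det(A_ψ)²` because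
`A` is integral. Hence `|qᵢ| ≤ 𝒟 ‖b‖₁ ≤ 𝒟² n ‖b‖₁`.
-/

section CauchyBinet

variable {R : Type*} [CommRing R] {ι κ : Type*} [Fintype ι] [DecidableEq ι] [Fintype κ]

theorem Matrix.det_mul_eq_sum_prod_mul_det_submatrix (M : Matrix ι κ R) (N : Matrix κ ι R) :
    (M * N).det = ∑ ψ : ι → κ, (∏ l, M l (ψ l)) * (N.submatrix ψ id).det := by
  have hrows : M * N = fun l => ∑ t, M l t • N t := by
    ext l l'
    simp [mul_apply, Finset.sum_apply]
  change detRowAlternating.toMultilinearMap (M * N) = _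
  rw [hrows, MultilinearMap.map_sum]
  exact Finset.sum_congr rfl fun ψ _ => MultilinearMap.map_smul_univ _ _ _

theorem Matrix.factorial_card_mul_det_mul_s3 (M : Matrix ι κ R) (N : Matrix κ ι R) :
    ((Fintype.card ι).factorial : R) * (M * N).det =
      ∑ ψ : ι → κ, (M.submatrix id ψ).det * (N.submatrix ψ id).det := by
  have hM : ∀ ψ : ι → κ, (M.submatrix id ψ).det =
      ∑ σ : Equiv.Perm ι, (Equiv.Perm.sign σ : R) * ∏ l, M l (ψ (σ l)) := fun ψ => by
    rw [← det_transpose, det_apply']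
    rfl
  calc ((Fintype.card ι).factorial : R) * (M * N).det
      = ∑ σ : Equiv.Perm ι, ∑ ψ : ι → κ,
          (∏ l, M l (ψ (σ l))) * (N.submatrix (ψ ∘ σ) id).det := by
        rw [← Fintype.card_perm, ← nsmul_eq_mul, ← Finset.card_univ, ← Finset.sum_const]
        refine Finset.sum_congr rfl fun σ _ => ?_
        rw [det_mul_eq_sum_prod_mul_det_submatrix]
        exact (Equiv.sum_comp (Equiv.arrowCongr σ.symm (Equiv.refl κ)) _).symm
    _ = ∑ ψ : ι → κ, ∑ σ : Equiv.Perm ι,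
          (Equiv.Perm.sign σ : R) * (∏ l, M l (ψ (σ l))) * (N.submatrix ψ id).det := by
        rw [Finset.sum_comm]
        refine Finset.sum_congr rfl fun ψ _ => Finset.sum_congr rfl fun σ _ => ?_
        rw [show N.submatrix (ψ ∘ σ) id = (N.submatrix ψ id).submatrix σ id from rfl,
          det_permute]
        ring
    _ = ∑ ψ : ι → κ, (M.submatrix id ψ).det * (N.submatrix ψ id).det := by
        simp only [hM, Finset.sum_mul]

theorem Matrix.factorial_card_mul_det_mul_diagonal_mul_transpose_s3 [DecidableEq κ]
    (X Y : Matrix ι κ R) (w : κ → R) :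
    ((Fintype.card ι).factorial : R) * (X * diagonal w * Yᵀ).det =
      ∑ ψ : ι → κ, (∏ l, w (ψ l)) * (X.submatrix id ψ).det * (Y.submatrix id ψ).det := by
  rw [factorial_card_mul_det_mul_s3]
  refine Finset.sum_congr rfl fun ψ _ => ?_
  have hdiag : (X * diagonal w).submatrix id ψ = X.submatrix id ψ * diagonal (w ∘ ψ) := by
    ext
    simp [mul_diagonal]
  rw [← transpose_submatrix, det_transpose, hdiag, det_mul, det_diagonal]
  simp only [Function.comp_apply]
  ring

end CauchyBinet

theorem Matrix.det_mul_dotProduct_inv_mulVec {R ι : Type*} [CommRing R] [Fintype ι]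
    [DecidableEq ι] {L : Matrix ι ι R} (hL : IsUnit L.det) (u v : ι → R) :
    L.det * (v ⬝ᵥ (L⁻¹ *ᵥ u)) = (L + vecMulVec u v).det - L.det := by
  rw [vecMulVec_eq (ι := Unit), det_add_replicateCol_mul_replicateRow hL,
    det_unique (1 + replicateRow Unit v * L⁻¹ * replicateCol Unit u), add_apply, one_apply_eq,
    Matrix.mul_assoc, ← replicateCol_mulVec, replicateRow_mul_replicateCol_apply]
  ring

section UpdateCol

variable {α ι ι' κ : Type*} [DecidableEq κ]

theorem Matrix.submatrix_updateCol_of_injective [DecidableEq ι] (X : Matrix ι' κ α) {ψ : ι → κ}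
    (hψ : Function.Injective ψ) {l : ι} {i : κ} (hl : ψ l = i) (v : ι' → α) :
    (X.updateCol i v).submatrix id ψ = (X.submatrix id ψ).updateCol l v := by
  ext a b
  by_cases hb : b = l
  · subst hb hl
    simp
  · have : ψ b ≠ ψ l := hψ.ne hb
    simp [updateCol_ne hb, updateCol_ne (hl ▸ this)]

theorem Matrix.submatrix_updateCol_of_notMem_range (X : Matrix ι' κ α) {ψ : ι → κ} {i : κ}
    (hi : ∀ l, ψ l ≠ i) (v : ι' → α) :
    (X.updateCol i v).submatrix id ψ = X.submatrix id ψ := by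
  ext a b
  simp [updateCol_ne (hi b)]

theorem Matrix.det_submatrix_updateCol_add_sub {R : Type*} [CommRing R] [Fintype ι]
    [DecidableEq ι] (X : Matrix ι κ R) {ψ : ι → κ} (hψ : Function.Injective ψ) {l : ι} {i : κ}
    (hl : ψ l = i) (v : ι → R) :
    ((X.updateCol i (Xᵀ i + v)).submatrix id ψ).det - (X.submatrix id ψ).det =
      ((X.submatrix id ψ).updateCol l v).det := by
  subst hl
  rw [submatrix_updateCol_of_injective X hψ rfl, det_updateCol_add,
    show Xᵀ (ψ l) = fun k => X.submatrix id ψ k l from rfl, updateCol_eq_self]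
  ring

end UpdateCol

theorem Matrix.abs_det_updateCol_le {R : Type*} [CommRing R] [LinearOrder R]
    [IsStrictOrderedRing R] {r : ℕ} (M : Matrix (Fin (r + 1)) (Fin (r + 1)) R) (j : Fin (r + 1))
    (v : Fin (r + 1) → R) {C : R}
    (hC : ∀ k : Fin (r + 1), |(M.submatrix k.succAbove j.succAbove).det| ≤ C) :
    |(M.updateCol j v).det| ≤ C * ∑ k, |v k| := by
  rw [det_succ_column _ j, Finset.mul_sum]
  refine (Finset.abs_sum_le_sum_abs _ _).trans (Finset.sum_le_sum fun k _ => ?_)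
  rw [updateCol_self, submatrix_updateCol_succAbove, abs_mul, abs_mul, abs_pow, abs_neg, abs_one,
    one_pow, one_mul, mul_comm C]
  exact mul_le_mul_of_nonneg_left (hC k) (abs_nonneg _)

section Physarum

variable {m n : ℕ} (B : Matrix (Fin m) (Fin n) ℝ) (b : Fin m → ℝ) (c x : Fin n → ℝ)

theorem det_mul_physQ (hL : (B * physW c x * Bᵀ).det ≠ 0) (i : Fin n) :
    (B * physW c x * Bᵀ).det * physQ B b c x i =
      (B.updateCol i (Bᵀ i + b) * physW c x * Bᵀ).det - (B * physW c x * Bᵀ).det := by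
  have hupd : B.updateCol i (Bᵀ i + b) = B + vecMulVec b (Pi.single i 1) := by
    ext k j
    by_cases h : j = i
    · subst h
      simp [vecMulVec_apply, add_comm]
    · simp [vecMulVec_apply, h]
  have hq : physQ B b c x i = (Pi.single i 1 ᵥ* physW c x ᵥ* Bᵀ) ⬝ᵥ
      ((B * physW c x * Bᵀ)⁻¹ *ᵥ b) := by
    rw [← dotProduct_mulVec, ← dotProduct_mulVec, single_one_dotProduct]
    rfl
  rw [hq, det_mul_dotProduct_inv_mulVec hL.isUnit, hupd, Matrix.add_mul,
    Matrix.add_mul, vecMulVec_mul, vecMulVec_mul]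

theorem factorial_mul_det_mul_physW_mul_transpose (X : Matrix (Fin m) (Fin n) ℝ) :
    (m.factorial : ℝ) * (X * physW c x * Bᵀ).det =
      ∑ ψ : Fin m → Fin n,
        (∏ l, x (ψ l) / c (ψ l)) * (X.submatrix id ψ).det * (B.submatrix id ψ).det := by
  simpa [physW] using factorial_card_mul_det_mul_diagonal_mul_transpose_s3 X B (fun j => x j / c j)

theorem det_mul_physW_mul_transpose_nonneg (hw : ∀ j, 0 ≤ x j / c j) :
    0 ≤ (B * physW c x * Bᵀ).det := by
  have hsum := factorial_mul_det_mul_physW_mul_transpose B c x B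
  have : 0 ≤ (m.factorial : ℝ) * (B * physW c x * Bᵀ).det :=
    hsum ▸ Finset.sum_nonneg fun ψ _ => by
      rw [mul_assoc]
      exact mul_nonneg (Finset.prod_nonneg fun l _ => hw (ψ l)) (mul_self_nonneg _)
  exact (mul_nonneg_iff_of_pos_left (by positivity)).mp this

theorem factorial_mul_det_mul_physQ (hL : (B * physW c x * Bᵀ).det ≠ 0) (i : Fin n) :
    (m.factorial : ℝ) * ((B * physW c x * Bᵀ).det * physQ B b c x i) =
      ∑ ψ : Fin m → Fin n, (∏ l, x (ψ l) / c (ψ l)) *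
        ((((B.updateCol i (Bᵀ i + b)).submatrix id ψ).det - (B.submatrix id ψ).det) *
          (B.submatrix id ψ).det) := by
  rw [det_mul_physQ B b c x hL, mul_sub, factorial_mul_det_mul_physW_mul_transpose,
    factorial_mul_det_mul_physW_mul_transpose, ← Finset.sum_sub_distrib]
  simp only [mul_sub, sub_mul, mul_assoc]

end Physarum

section Subdeterminants

variable {m n : ℕ} {A : Matrix (Fin m) (Fin n) ℤ} {𝒟 : ℝ}

theorem det_rmat {k : ℕ} (M : Matrix (Fin k) (Fin k) ℤ) : (rmat M).det = M.det :=
  (RingHom.map_det (Int.castRingHom ℝ) M).symm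

theorem abs_det_rmat_le_sq {k : ℕ} (M : Matrix (Fin k) (Fin k) ℤ) :
    |(rmat M).det| ≤ (rmat M).det ^ 2 := by
  rw [det_rmat]
  exact_mod_cast (Int.natCast_natAbs _).symm.trans_le (Int.natAbs_le_self_sq M.det)

theorem one_le_of_isGreatest_subdets (hD : IsGreatest (subdets A) 𝒟) : 1 ≤ 𝒟 :=
  hD.2 ⟨0, Fin.elim0, Fin.elim0, Function.injective_of_subsingleton _,
    Function.injective_of_subsingleton _, by simp⟩

theorem abs_det_submatrix_le_of_isGreatest_subdets (hD : IsGreatest (subdets A) 𝒟) {k : ℕ}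
    {f : Fin k → Fin m} {g : Fin k → Fin n} (hf : Function.Injective f)
    (hg : Function.Injective g) : |((rmat A).submatrix f g).det| ≤ 𝒟 :=
  hD.2 ⟨k, f, g, hf, hg, congrArg abs (det_rmat (A.submatrix f g))⟩

theorem abs_det_submatrix_updateCol_le (hD : IsGreatest (subdets A) 𝒟) {ψ : Fin m → Fin n}
    (hψ : Function.Injective ψ) (l : Fin m) (v : Fin m → ℝ) :
    |(((rmat A).submatrix id ψ).updateCol l v).det| ≤ 𝒟 * ∑ k, |v k| := by
  cases m with
  | zero => exact l.elim0
  | succ r =>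
    exact abs_det_updateCol_le _ l v fun k => abs_det_submatrix_le_of_isGreatest_subdets hD
      Fin.succAbove_right_injective (hψ.comp Fin.succAbove_right_injective)

theorem abs_det_updateCol_sub_mul_det_le (hD : IsGreatest (subdets A) 𝒟) (i : Fin n)
    (v : Fin m → ℝ) (ψ : Fin m → Fin n) :
    |((((rmat A).updateCol i ((rmat A)ᵀ i + v)).submatrix id ψ).det -
        ((rmat A).submatrix id ψ).det) * ((rmat A).submatrix id ψ).det| ≤
      𝒟 * (∑ k, |v k|) * ((rmat A).submatrix id ψ).det ^ 2 := by
  have hC : 0 ≤ 𝒟 * ∑ k, |v k| :=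
    mul_nonneg (zero_le_one.trans (one_le_of_isGreatest_subdets hD))
      (Finset.sum_nonneg fun k _ => abs_nonneg _)
  by_cases hψ : Function.Injective ψ
  swap
  · obtain ⟨a, b, hab, hne⟩ := Function.not_injective_iff.mp hψ
    have : ((rmat A).submatrix id ψ).det = 0 :=
      det_zero_of_column_eq hne fun k => by simp [hab]
    simp [this]
  by_cases hi : ∃ l, ψ l = i
  · obtain ⟨l, hl⟩ := hi
    rw [det_submatrix_updateCol_add_sub _ hψ hl, abs_mul]
    exact mul_le_mul (abs_det_submatrix_updateCol_le hD hψ l v)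
      (abs_det_rmat_le_sq (A.submatrix id ψ)) (abs_nonneg _) hC
  · push Not at hi
    rw [submatrix_updateCol_of_notMem_range _ hi, sub_self, zero_mul, abs_zero]
    positivity

theorem abs_physQ_le (hD : IsGreatest (subdets A) 𝒟) (b : Fin m → ℝ) (c x : Fin n → ℝ)
    (hw : ∀ j, 0 ≤ x j / c j) (i : Fin n) :
    |physQ (rmat A) b c x i| ≤ 𝒟 * ∑ k, |b k| := by
  set B := rmat A
  set L := B * physW c x * Bᵀ
  have hweight : ∀ ψ : Fin m → Fin n, 0 ≤ ∏ l, x (ψ l) / c (ψ l) :=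
    fun ψ => Finset.prod_nonneg fun l _ => hw (ψ l)
  by_cases hL : L.det = 0
  · have hinv : L⁻¹ = 0 := nonsing_inv_apply_not_isUnit _ (by simp [hL])
    rw [physQ, hinv, zero_mulVec, mulVec_zero, mulVec_zero, Pi.zero_apply, abs_zero]
    exact mul_nonneg (zero_le_one.trans (one_le_of_isGreatest_subdets hD))
      (Finset.sum_nonneg fun k _ => abs_nonneg _)
  have hpos : 0 < (m.factorial : ℝ) * L.det :=
    mul_pos (by positivity) ((det_mul_physW_mul_transpose_nonneg B c x hw).lt_of_ne' hL)
  refine le_of_mul_le_mul_left ?_ hpos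
  calc (m.factorial : ℝ) * L.det * |physQ B b c x i|
      = |(m.factorial : ℝ) * (L.det * physQ B b c x i)| := by
        rw [← mul_assoc, abs_mul _ (physQ B b c x i), abs_of_pos hpos]
    _ ≤ ∑ ψ : Fin m → Fin n, (∏ l, x (ψ l) / c (ψ l)) *
          |(((B.updateCol i (Bᵀ i + b)).submatrix id ψ).det - (B.submatrix id ψ).det) *
            (B.submatrix id ψ).det| := by
        rw [factorial_mul_det_mul_physQ B b c x hL]
        refine (Finset.abs_sum_le_sum_abs _ _).trans_eq (Finset.sum_congr rfl fun ψ _ => ?_)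
        rw [abs_mul, abs_of_nonneg (hweight ψ)]
    _ ≤ ∑ ψ : Fin m → Fin n, (∏ l, x (ψ l) / c (ψ l)) *
          (𝒟 * (∑ k, |b k|) * (B.submatrix id ψ).det ^ 2) :=
        Finset.sum_le_sum fun ψ _ => mul_le_mul_of_nonneg_left
          (abs_det_updateCol_sub_mul_det_le hD i b ψ) (hweight ψ)
    _ = (m.factorial : ℝ) * L.det * (𝒟 * ∑ k, |b k|) := by
        rw [factorial_mul_det_mul_physW_mul_transpose, Finset.sum_mul]
        exact Finset.sum_congr rfl fun ψ _ => by ring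

end Subdeterminants

theorem q_bound_uniform_general {m n : ℕ} (A : Matrix (Fin m) (Fin n) ℤ)
    (𝒟 : ℝ) (hD : IsGreatest (subdets A) 𝒟)
    (b : Fin m → ℤ) (c : Fin n → ℤ) (hc : ∀ i, 0 < c i)
    (x : Fin n → ℝ) (hx : ∀ i, 0 < x i) :
    ∀ i, |physQ (rmat A) (fun j => (b j : ℝ)) (fun i => (c i : ℝ)) x i| ≤
      𝒟 ^ 2 * n * ∑ j, |(b j : ℝ)| := by
  intro i
  have hw : ∀ j, 0 ≤ x j / c j := fun j => div_nonneg (hx j).le (by exact_mod_cast (hc j).le)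
  have hD1 : 1 ≤ 𝒟 := one_le_of_isGreatest_subdets hD
  have hn : (1 : ℝ) ≤ n := by exact_mod_cast i.pos
  calc |physQ (rmat A) (fun j => (b j : ℝ)) (fun i => (c i : ℝ)) x i|
      ≤ 𝒟 * ∑ j, |(b j : ℝ)| := abs_physQ_le hD _ _ x hw i
    _ ≤ 𝒟 ^ 2 * n * ∑ j, |(b j : ℝ)| := by
      gcongr
      nlinarith

theorem q_bound_uniform {m n : ℕ} (A : Matrix (Fin m) (Fin n) ℤ)
    (hrank : (rmat A).rank = m)
    (𝒟 : ℝ) (hD : IsGreatest (subdets A) 𝒟)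
    (b : Fin m → ℤ) (c : Fin n → ℤ) (hc : ∀ i, 0 < c i)
    (hfeas : ∃ y : Fin n → ℝ, (rmat A *ᵥ y = fun j => (b j : ℝ)) ∧ ∀ i, 0 ≤ y i)
    (x : Fin n → ℝ) (hx : ∀ i, 0 < x i) :
    ∀ i, |physQ (rmat A) (fun j => (b j : ℝ)) (fun i => (c i : ℝ)) x i| ≤
      𝒟 ^ 2 * n * ∑ j, |(b j : ℝ)| :=
  q_bound_uniform_general A 𝒟 hD b c hc x hx
end

section
/- Suppose x : [0,T) → ℝⁿ_{>0} is a solution of the Physarum dynamics ẋ = q − x for some finite T > 0. Then the limit lim_{t → T⁻} x(t) exists. -/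
open Matrix Filter Set Topology

/-!
Write `u = Aᵀ L⁻¹ b`, so that `qᵢ = (xᵢ / cᵢ) uᵢ`, and let `K = ∑ (xᵢ / cᵢ) uᵢ²`. For every
feasible `y ≥ 0` one has `y ⬝ u = b ⬝ L⁻¹ b = q ⬝ u = K`, so along a solution the potential
`φ = ∑ cᵢ yᵢ log xᵢ` satisfies `φ' = K - c ⬝ y`, while by AM-GM the cost `E = c ⬝ x` satisfies
`E' = c ⬝ q - E ≤ (K - E) / 2`. Hence `E - φ / 2` grows at most linearly; as `φ ≤ E + O(1)`, both
`E` and `φ` stay bounded on `[0, T)`. Finally `|ẋᵢ| ≤ Mᵢ + K / 2`, the derivative of the bounded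
increasing function `Mᵢ t + (φ + (c ⬝ y) t) / 2`, so `xᵢ` has bounded variation near `T`.
-/

section DerivativeDomination

variable {E : Type*} [NormedAddCommGroup E] [NormedSpace ℝ E] {f f' : ℝ → E} {g g' : ℝ → ℝ}

theorem norm_sub_le_sub_of_norm_deriv_le {s : Set ℝ} (hs : s.OrdConnected)
    (hf : ∀ t ∈ s, HasDerivWithinAt f (f' t) s t) (hg : ∀ t ∈ s, HasDerivWithinAt g (g' t) s t)
    (hfg : ∀ t ∈ s, ‖f' t‖ ≤ g' t) {a b : ℝ} (ha : a ∈ s) (hb : b ∈ s) (hab : a ≤ b) :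
    ‖f b - f a‖ ≤ g b - g a := by
  have hsub : Icc a b ⊆ s := hs.out ha hb
  have hmem : ∀ t ∈ Ico a b, t ∈ s := fun t ht => hsub (Ico_subset_Icc_self ht)
  have hnhds : ∀ t ∈ Ico a b, s ∈ 𝓝[≥] t := fun t ht =>
    mem_of_superset (Icc_mem_nhdsGE ht.2) ((Icc_subset_Icc_left ht.1).trans hsub)
  refine image_norm_le_of_norm_deriv_right_le_deriv_boundary' (f := fun t => f t - f a)
    (B := fun t => g t - g a) ?_ (fun t ht => ?_) (by simp) ?_ (fun t ht => ?_)
    (fun t ht => hfg t (hmem t ht)) ⟨hab, le_rfl⟩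
  · exact fun t ht => ((hf t (hsub ht)).continuousWithinAt.mono hsub).sub continuousWithinAt_const
  · exact ((hf t (hmem t ht)).mono_of_mem_nhdsWithin (hnhds t ht)).sub_const _
  · exact fun t ht => ((hg t (hsub ht)).continuousWithinAt.mono hsub).sub continuousWithinAt_const
  · exact ((hg t (hmem t ht)).mono_of_mem_nhdsWithin (hnhds t ht)).sub_const _

theorem exists_tendsto_of_dist_le_dist {ι α β : Type*} [PseudoMetricSpace α] [CompleteSpace α]
    [PseudoMetricSpace β] {l : Filter ι} [l.NeBot] {f : ι → α} {g : ι → β} {y : β}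
    (hg : Tendsto g l (𝓝 y)) (hfg : ∀ᶠ p in l ×ˢ l, dist (f p.1) (f p.2) ≤ dist (g p.1) (g p.2)) :
    ∃ x, Tendsto f l (𝓝 x) := by
  refine cauchy_map_iff_exists_tendsto.1 (cauchy_map_iff.2 ⟨‹_›, ?_⟩)
  have hgc := (cauchy_map_iff.1 hg.cauchy_map).2
  rw [tendsto_uniformity_iff_dist_tendsto_zero] at hgc ⊢
  exact squeeze_zero' (Eventually.of_forall fun _ => dist_nonneg) hfg hgc

theorem exists_tendsto_nhdsWithin_Ico_of_norm_deriv_le [CompleteSpace E] {a b : ℝ} (hab : a < b)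
    (hf : ∀ t ∈ Ico a b, HasDerivWithinAt f (f' t) (Ico a b) t)
    (hg : ∀ t ∈ Ico a b, HasDerivWithinAt g (g' t) (Ico a b) t)
    (hfg : ∀ t ∈ Ico a b, ‖f' t‖ ≤ g' t) (hgb : BddAbove (g '' Ico a b)) :
    ∃ l, Tendsto f (𝓝[Ico a b] b) (𝓝 l) := by
  have hvar : ∀ t ∈ Ico a b, ∀ t' ∈ Ico a b, t ≤ t' → ‖f t' - f t‖ ≤ g t' - g t :=
    fun t ht t' ht' htt' => norm_sub_le_sub_of_norm_deriv_le ordConnected_Ico hf hg hfg ht ht' htt'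
  have hmono : MonotoneOn g (Ico a b) := fun t ht t' ht' htt' =>
    sub_nonneg.1 ((norm_nonneg _).trans (hvar t ht t' ht' htt'))
  have hdist : ∀ t ∈ Ico a b, ∀ t' ∈ Ico a b, t ≤ t' → dist (f t) (f t') ≤ dist (g t) (g t') :=
    fun t ht t' ht' htt' => calc
      dist (f t) (f t') = ‖f t' - f t‖ := by rw [dist_comm, dist_eq_norm]
      _ ≤ g t' - g t := hvar t ht t' ht' htt'
      _ ≤ dist (g t) (g t') := by rw [dist_comm, Real.dist_eq]; exact le_abs_self _
  rw [nhdsWithin_Ico_eq_nhdsLT hab]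
  refine exists_tendsto_of_dist_le_dist
    ((hmono.mono Ioo_subset_Ico_self).tendsto_nhdsWithin_Ioo_left (nonempty_Ioo.2 hab)
      (hgb.mono (image_mono Ioo_subset_Ico_self))) ?_
  rw [← nhdsWithin_Ico_eq_nhdsLT hab]
  filter_upwards [prod_mem_prod self_mem_nhdsWithin self_mem_nhdsWithin] with ⟨t, t'⟩ ⟨ht, ht'⟩
  rcases le_total t t' with htt' | htt'
  · exact hdist t ht t' ht' htt'
  · rw [dist_comm, dist_comm (g t)]
    exact hdist t' ht' t ht htt'

end DerivativeDomination

theorem mul_log_le_add_mul_log {y Y ξ : ℝ} (hy : 0 ≤ y) (hyY : y ≤ Y) (hY : 0 < Y) (hξ : 0 < ξ) :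
    y * Real.log ξ ≤ ξ + y * Real.log Y := by
  have hlog : Real.log ξ - Real.log Y ≤ ξ / Y := by
    rw [← Real.log_div hξ.ne' hY.ne']
    linarith [Real.log_le_sub_one_of_pos (div_pos hξ hY)]
  have hratio : y * (ξ / Y) ≤ ξ := by
    rw [mul_div_assoc', div_le_iff₀ hY, mul_comm ξ]
    exact mul_le_mul_of_nonneg_right hyY hξ.le
  nlinarith [mul_le_mul_of_nonneg_left hlog hy]

theorem Matrix.vecMul_injective_of_rank_eq_card {K ι κ : Type*} [Field K] [Fintype ι]
    [Fintype κ] {A : Matrix ι κ K} (hA : A.rank = Fintype.card ι) : Function.Injective A.vecMul :=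
  vecMul_injective_iff.2 <| linearIndependent_iff_card_eq_finrank_span.2 <| by
    rw [Set.finrank, ← hA, rank_eq_finrank_span_row]

section Physarum

variable {m n : ℕ} {B : Matrix (Fin m) (Fin n) ℝ} {b : Fin m → ℝ} {c y ξ : Fin n → ℝ}

noncomputable def physU (B : Matrix (Fin m) (Fin n) ℝ) (b : Fin m → ℝ) (c ξ : Fin n → ℝ) :
    Fin n → ℝ :=
  Bᵀ *ᵥ ((B * physW c ξ * Bᵀ)⁻¹ *ᵥ b)

noncomputable def physEnergy (B : Matrix (Fin m) (Fin n) ℝ) (b : Fin m → ℝ) (c ξ : Fin n → ℝ) :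
    ℝ :=
  ∑ i, ξ i / c i * physU B b c ξ i ^ 2

noncomputable def logPotential (c y ξ : Fin n → ℝ) : ℝ :=
  ∑ i, c i * y i * Real.log (ξ i)

theorem physQ_apply (i : Fin n) : physQ B b c ξ i = ξ i / c i * physU B b c ξ i := by
  simp [physQ, physU, physW, mulVec_diagonal]

theorem posDef_physL (hrank : B.rank = m) (hc : ∀ i, 0 < c i) (hξ : ∀ i, 0 < ξ i) :
    (B * physW c ξ * Bᵀ).PosDef := by
  have hW : (physW c ξ).PosDef := PosDef.diagonal fun i => div_pos (hξ i) (hc i)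
  simpa using
    hW.mul_mul_conjTranspose_same (vecMul_injective_of_rank_eq_card (by simpa using hrank))

theorem mulVec_physQ (hrank : B.rank = m) (hc : ∀ i, 0 < c i) (hξ : ∀ i, 0 < ξ i) :
    B *ᵥ physQ B b c ξ = b := by
  have hdet := (isUnit_iff_isUnit_det _).1 (posDef_physL hrank hc hξ).isUnit
  rw [physQ, mulVec_mulVec, mulVec_mulVec, mulVec_mulVec, mul_nonsing_inv _ hdet, one_mulVec]

theorem dotProduct_physU (hrank : B.rank = m) (hc : ∀ i, 0 < c i) (hξ : ∀ i, 0 < ξ i)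
    (hy : B *ᵥ y = b) : y ⬝ᵥ physU B b c ξ = physEnergy B b c ξ := by
  have hfeas : ∀ z, B *ᵥ z = b → z ⬝ᵥ physU B b c ξ = b ⬝ᵥ ((B * physW c ξ * Bᵀ)⁻¹ *ᵥ b) := by
    intro z hz
    rw [physU, dotProduct_mulVec, vecMul_transpose, hz]
  rw [hfeas y hy, ← hfeas _ (mulVec_physQ hrank hc hξ), physEnergy, dotProduct]
  exact Finset.sum_congr rfl fun i _ => by rw [physQ_apply]; ring

theorem dotProduct_physQ_le (hc : ∀ i, 0 < c i) (hξ : ∀ i, 0 < ξ i) :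
    c ⬝ᵥ physQ B b c ξ ≤ (c ⬝ᵥ ξ + physEnergy B b c ξ) / 2 := by
  rw [physEnergy, dotProduct, dotProduct, ← Finset.sum_add_distrib, Finset.sum_div]
  refine Finset.sum_le_sum fun i _ => ?_
  rw [physQ_apply]
  have hgap : (c i * ξ i + ξ i / c i * physU B b c ξ i ^ 2) / 2
      - c i * (ξ i / c i * physU B b c ξ i) = ξ i / c i * (c i - physU B b c ξ i) ^ 2 / 2 := by
    field_simp
    ring
  nlinarith [mul_nonneg (div_pos (hξ i) (hc i)).le (sq_nonneg (c i - physU B b c ξ i))]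

theorem abs_physQ_le_s5 (hc : ∀ i, 0 < c i) (hξ : ∀ i, 0 < ξ i) (i : Fin n) :
    |physQ B b c ξ i| ≤ (ξ i / c i + physEnergy B b c ξ) / 2 := by
  have hw : 0 < ξ i / c i := div_pos (hξ i) (hc i)
  have hterm : ξ i / c i * physU B b c ξ i ^ 2 ≤ physEnergy B b c ξ :=
    Finset.single_le_sum (f := fun j => ξ j / c j * physU B b c ξ j ^ 2)
      (fun j _ => mul_nonneg (div_pos (hξ j) (hc j)).le (sq_nonneg _)) (Finset.mem_univ i)
  rw [physQ_apply, abs_mul, abs_of_pos hw]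
  nlinarith [mul_nonneg hw.le (sq_nonneg (1 - |physU B b c ξ i|)), sq_abs (physU B b c ξ i)]

theorem logPotential_le {Y : ℝ} (hc : ∀ i, 0 ≤ c i) (hy : ∀ i, 0 ≤ y i) (hyY : ∀ i, y i ≤ Y)
    (hY : 0 < Y) (hξ : ∀ i, 0 < ξ i) : logPotential c y ξ ≤ c ⬝ᵥ ξ + c ⬝ᵥ y * Real.log Y := by
  rw [logPotential, dotProduct, dotProduct, Finset.sum_mul, ← Finset.sum_add_distrib]
  refine Finset.sum_le_sum fun i _ => ?_
  calc c i * y i * Real.log (ξ i) = c i * (y i * Real.log (ξ i)) := by ring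
    _ ≤ c i * (ξ i + y i * Real.log Y) :=
      mul_le_mul_of_nonneg_left (mul_log_le_add_mul_log (hy i) (hyY i) hY (hξ i)) (hc i)
    _ = c i * ξ i + c i * y i * Real.log Y := by ring

variable {x : ℝ → Fin n → ℝ} {s : Set ℝ}

theorem IsPhysSolOn.hasDerivWithinAt_apply (hsol : IsPhysSolOn B b c x s) {t : ℝ} (ht : t ∈ s)
    (i : Fin n) : HasDerivWithinAt (fun τ => x τ i) (physQ B b c (x t) i - x t i) s t := by
  simpa using hasDerivWithinAt_pi.1 (hsol t ht).2 i

theorem IsPhysSolOn.hasDerivWithinAt_cost (hsol : IsPhysSolOn B b c x s) {t : ℝ} (ht : t ∈ s) :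
    HasDerivWithinAt (fun τ => c ⬝ᵥ x τ) (c ⬝ᵥ physQ B b c (x t) - c ⬝ᵥ x t) s t := by
  rw [← dotProduct_sub]
  exact HasDerivWithinAt.fun_sum fun i _ => (hsol.hasDerivWithinAt_apply ht i).const_mul (c i)

theorem IsPhysSolOn.hasDerivWithinAt_logPotential (hsol : IsPhysSolOn B b c x s)
    (hrank : B.rank = m) (hc : ∀ i, 0 < c i) (hy : B *ᵥ y = b) {t : ℝ} (ht : t ∈ s) :
    HasDerivWithinAt (fun τ => logPotential c y (x τ)) (physEnergy B b c (x t) - c ⬝ᵥ y) s t := by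
  have hx := (hsol t ht).1
  rw [← dotProduct_physU hrank hc hx hy, dotProduct_comm c, ← dotProduct_sub]
  refine (HasDerivWithinAt.fun_sum (u := Finset.univ) fun i _ =>
    ((hsol.hasDerivWithinAt_apply ht i).log (hx i).ne').const_mul (c i * y i)).congr_deriv
    (Finset.sum_congr rfl fun i _ => ?_)
  rw [physQ_apply, Pi.sub_apply]
  field_simp [(hx i).ne', (hc i).ne']

theorem IsPhysSolOn.cost_sub_half_logPotential_le (hsol : IsPhysSolOn B b c x s)
    (hs : Convex ℝ s) (hrank : B.rank = m) (hc : ∀ i, 0 < c i) (hy : B *ᵥ y = b) {t₀ t : ℝ}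
    (ht₀ : t₀ ∈ s) (ht : t ∈ s) (htt : t₀ ≤ t) :
    c ⬝ᵥ x t - logPotential c y (x t) / 2
      ≤ c ⬝ᵥ x t₀ - logPotential c y (x t₀) / 2 + c ⬝ᵥ y * (t - t₀) / 2 := by
  let V : ℝ → ℝ := fun τ => c ⬝ᵥ y * τ / 2 + logPotential c y (x τ) / 2 - c ⬝ᵥ x τ
  have hV : ∀ τ ∈ s, HasDerivWithinAt V (physEnergy B b c (x τ) / 2 + c ⬝ᵥ x τ
      - c ⬝ᵥ physQ B b c (x τ)) s τ := fun τ hτ => by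
    refine ((((hasDerivWithinAt_id τ s).const_mul (c ⬝ᵥ y)).div_const 2).add
      ((hsol.hasDerivWithinAt_logPotential hrank hc hy hτ).div_const 2)
      |>.sub (hsol.hasDerivWithinAt_cost hτ)).congr_deriv ?_
    ring
  have hV' : ∀ τ ∈ s, 0 ≤ physEnergy B b c (x τ) / 2 + c ⬝ᵥ x τ - c ⬝ᵥ physQ B b c (x τ) :=
    fun τ hτ => by
      have hx := (hsol τ hτ).1
      have hcost : 0 ≤ c ⬝ᵥ x τ := Finset.sum_nonneg fun i _ => (mul_pos (hc i) (hx i)).le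
      linarith [dotProduct_physQ_le (B := B) (b := b) hc hx]
  have hmono : MonotoneOn V s := monotoneOn_of_hasDerivWithinAt_nonneg hs
    (fun τ hτ => (hV τ hτ).continuousWithinAt)
    (fun τ hτ => (hV τ (interior_subset hτ)).mono interior_subset)
    (fun τ hτ => hV' τ (interior_subset hτ))
  have := hmono ht₀ ht htt
  simp only [V] at this
  linarith

theorem IsPhysSolOn.exists_cost_le_and_logPotential_le {T : ℝ} (hsol : IsPhysSolOn B b c x (Ico 0 T)) (hT : 0 < T)
    (hrank : B.rank = m) (hc : ∀ i, 0 < c i) (hy : B *ᵥ y = b) (hy0 : ∀ i, 0 ≤ y i) :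
    ∃ R, ∀ t ∈ Ico 0 T, c ⬝ᵥ x t ≤ R ∧ logPotential c y (x t) ≤ R := by
  have hcy : 0 ≤ c ⬝ᵥ y := Finset.sum_nonneg fun i _ => mul_nonneg (hc i).le (hy0 i)
  have hD : 0 ≤ c ⬝ᵥ y * Real.log (‖y‖ + 1) :=
    mul_nonneg hcy (Real.log_nonneg (by linarith [norm_nonneg y]))
  refine ⟨2 * (c ⬝ᵥ x 0 - logPotential c y (x 0) / 2 + c ⬝ᵥ y * T / 2)
    + 2 * (c ⬝ᵥ y * Real.log (‖y‖ + 1)), fun t ht => ?_⟩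
  have hlog : logPotential c y (x t) ≤ c ⬝ᵥ x t + c ⬝ᵥ y * Real.log (‖y‖ + 1) :=
    logPotential_le (fun i => (hc i).le) hy0
      (fun i => (Real.le_norm_self _).trans ((norm_le_pi_norm y i).trans (by linarith)))
      (by positivity) (hsol t ht).1
  have hdrift := hsol.cost_sub_half_logPotential_le (convex_Ico 0 T) hrank hc hy
    ⟨le_rfl, hT⟩ ht ht.1
  have hT' : c ⬝ᵥ y * (t - 0) ≤ c ⬝ᵥ y * T := mul_le_mul_of_nonneg_left (by linarith [ht.2]) hcy
  constructor <;> linarith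

theorem IsPhysSolOn.exists_tendsto_apply {T R : ℝ} (hsol : IsPhysSolOn B b c x (Ico 0 T))
    (hT : 0 < T) (hrank : B.rank = m) (hc : ∀ i, 0 < c i) (hy : B *ᵥ y = b) (hy0 : ∀ i, 0 ≤ y i)
    (hR : ∀ t ∈ Ico 0 T, c ⬝ᵥ x t ≤ R ∧ logPotential c y (x t) ≤ R) (i : Fin n) :
    ∃ l, Tendsto (fun t => x t i) (𝓝[Ico 0 T] T) (𝓝 l) := by
  have hcy : 0 ≤ c ⬝ᵥ y := Finset.sum_nonneg fun j _ => mul_nonneg (hc j).le (hy0 j)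
  have hxi : ∀ t ∈ Ico 0 T, x t i ≤ R / c i := fun t ht => by
    rw [le_div_iff₀ (hc i), mul_comm]
    exact (Finset.single_le_sum (f := fun j => c j * x t j)
      (fun j _ => (mul_pos (hc j) ((hsol t ht).1 j)).le) (Finset.mem_univ i)).trans (hR t ht).1
  set M := (1 / (2 * c i) + 1) * (R / c i)
  have hM : 0 ≤ M := mul_nonneg (by have := hc i; positivity)
    (((hsol 0 ⟨le_rfl, hT⟩).1 i).le.trans (hxi 0 ⟨le_rfl, hT⟩))
  refine exists_tendsto_nhdsWithin_Ico_of_norm_deriv_le hT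
    (g := fun t => M * t + (logPotential c y (x t) + c ⬝ᵥ y * t) / 2)
    (g' := fun t => M + physEnergy B b c (x t) / 2) (fun t ht => hsol.hasDerivWithinAt_apply ht i)
    (fun t ht => ?_) (fun t ht => ?_) ⟨M * T + (R + c ⬝ᵥ y * T) / 2, ?_⟩
  · refine (((hasDerivWithinAt_id t _).const_mul M).add
      (((hsol.hasDerivWithinAt_logPotential hrank hc hy ht).add
        ((hasDerivWithinAt_id t _).const_mul (c ⬝ᵥ y))).div_const 2)).congr_deriv ?_
    ring
  · have hx := (hsol t ht).1
    have hq := abs_physQ_le_s5 (B := B) (b := b) hc hx i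
    have hMx : x t i / c i / 2 + x t i ≤ M := by
      calc x t i / c i / 2 + x t i = (1 / (2 * c i) + 1) * x t i := by field_simp
        _ ≤ M := mul_le_mul_of_nonneg_left (hxi t ht) (by have := hc i; positivity)
    rw [Real.norm_eq_abs]
    linarith [abs_sub (physQ B b c (x t) i) (x t i), abs_of_pos (hx i)]
  · rintro _ ⟨t, ht, rfl⟩
    have h1 : M * t ≤ M * T := mul_le_mul_of_nonneg_left ht.2.le hM
    have h2 : c ⬝ᵥ y * t ≤ c ⬝ᵥ y * T := mul_le_mul_of_nonneg_left ht.2.le hcy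
    linarith [(hR t ht).2]

end Physarum

theorem physarum_limit_exists_at_finite_time {m n : ℕ} (A : Matrix (Fin m) (Fin n) ℤ)
    (hrank : (rmat A).rank = m)
    (b : Fin m → ℤ) (c : Fin n → ℤ) (hc : ∀ i, 0 < c i)
    (hfeas : ∃ y : Fin n → ℝ, (rmat A *ᵥ y = fun j => (b j : ℝ)) ∧ ∀ i, 0 ≤ y i)
    (T : ℝ) (hT : 0 < T) (x : ℝ → Fin n → ℝ)
    (hsol : IsPhysSolOn (rmat A) (fun j => (b j : ℝ)) (fun i => (c i : ℝ)) x (Set.Ico 0 T)) :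
    ∃ xT : Fin n → ℝ, Filter.Tendsto x (nhdsWithin T (Set.Ico 0 T)) (nhds xT) := by
  obtain ⟨y, hy, hy0⟩ := hfeas
  have hc' : ∀ i, (0 : ℝ) < c i := fun i => Int.cast_pos.2 (hc i)
  obtain ⟨R, hR⟩ := hsol.exists_cost_le_and_logPotential_le hT hrank hc' hy hy0
  choose l hl using hsol.exists_tendsto_apply hT hrank hc' hy hy0 hR
  exact ⟨l, tendsto_pi_nhds.2 hl⟩
end

section
/- Suppose x : [0,T) → ℝⁿ_{>0} is a solution of the Physarum dynamics ẋ = q − x for some finite T > 0, let y be any feasible solution (A y = b, y ≥ 0), and suppose the limit x(T) := lim_{t → T⁻} x(t) exists. Then xᵢ(T) > 0 for every i in the support of y, i.e., every i with yᵢ > 0. -/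
open Matrix Filter Set Topology

/-!
Along a Physarum trajectory, `V(t) = ∑ⱼ cⱼ yⱼ log xⱼ(t)` satisfies
`V' = ∑ⱼ cⱼ yⱼ qⱼ / xⱼ - cᵀy = bᵀ L⁻¹ b - cᵀy ≥ -cᵀy`, because `cⱼ qⱼ / xⱼ = (Aᵀp)ⱼ` and `Ay = b`
turn the sum into the quadratic form of the positive semidefinite matrix `L⁻¹`.
So `V` stays bounded below on `[0, T)`. Near `T` every `xⱼ` is bounded above by `xⱼ(T) + 1`,
hence a term `cᵢ yᵢ log xᵢ` with `yᵢ > 0` cannot tend to `-∞`: `xᵢ` stays away from `0`.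
-/

section PhysarumFlux

variable {m n : ℕ} (B : Matrix (Fin m) (Fin n) ℝ) {c x : Fin n → ℝ}

lemma mul_physQ_div_eq (b : Fin m → ℝ) {i : Fin n} (hci : c i ≠ 0) (hxi : x i ≠ 0) :
    c i * (physQ B b c x i / x i) = (Bᵀ *ᵥ ((B * physW c x * Bᵀ)⁻¹ *ᵥ b)) i := by
  simp only [physQ, physW, mulVec_diagonal]
  field_simp

lemma physL_inv_posSemidef (hc : ∀ i, 0 ≤ c i) (hx : ∀ i, 0 ≤ x i) :
    (B * physW c x * Bᵀ)⁻¹.PosSemidef := by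
  have hW : (physW c x).PosSemidef := PosSemidef.diagonal fun i => div_nonneg (hx i) (hc i)
  simpa using (hW.mul_mul_conjTranspose_same B).inv

lemma sum_mul_physQ_div_nonneg {y : Fin n → ℝ} (hc : ∀ i, 0 < c i) (hx : ∀ i, 0 < x i) :
    0 ≤ ∑ i, c i * y i * (physQ B (B *ᵥ y) c x i / x i) :=
  calc 0 ≤ (B *ᵥ y) ⬝ᵥ ((B * physW c x * Bᵀ)⁻¹ *ᵥ (B *ᵥ y)) := by
        simpa using (physL_inv_posSemidef B (fun i => (hc i).le) (fun i => (hx i).le))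
          |>.dotProduct_mulVec_nonneg (B *ᵥ y)
    _ = ∑ i, y i * (Bᵀ *ᵥ ((B * physW c x * Bᵀ)⁻¹ *ᵥ (B *ᵥ y))) i := by
        rw [← dotProduct, dotProduct_mulVec y, vecMul_transpose]
    _ = ∑ i, c i * y i * (physQ B (B *ᵥ y) c x i / x i) := by
        refine Finset.sum_congr rfl fun i _ => ?_
        rw [← mul_physQ_div_eq B _ (hc i).ne' (hx i).ne']
        ring

end PhysarumFlux

lemma hasDerivWithinAt_sum_mul_log {ι : Type*} [Fintype ι] {x : ℝ → ι → ℝ} {x' : ι → ℝ}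
    {s : Set ℝ} {t : ℝ} (w : ι → ℝ) (hx : HasDerivWithinAt x x' s t) (hxt : ∀ j, x t j ≠ 0) :
    HasDerivWithinAt (fun u => ∑ j, w j * Real.log (x u j)) (∑ j, w j * (x' j / x t j)) s t :=
  .fun_sum fun j _ => ((hasDerivWithinAt_pi.mp hx j).log (hxt j)).const_mul _

lemma IsPhysSolOn.monotoneOn_lyapunov {m n : ℕ} {B : Matrix (Fin m) (Fin n) ℝ}
    {c y : Fin n → ℝ} {x : ℝ → Fin n → ℝ} {s : Set ℝ} (hsol : IsPhysSolOn B (B *ᵥ y) c x s)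
    (hs : Convex ℝ s) (hc : ∀ i, 0 < c i) :
    MonotoneOn (fun t => ∑ j, c j * y j * Real.log (x t j) + (∑ j, c j * y j) * t) s := by
  have hderiv : ∀ t ∈ s, HasDerivWithinAt
      (fun t => ∑ j, c j * y j * Real.log (x t j) + (∑ j, c j * y j) * t)
      (∑ j, c j * y j * (physQ B (B *ᵥ y) c (x t) j / x t j)) s t := by
    intro t ht
    obtain ⟨hpos, hx⟩ := hsol t ht
    refine ((hasDerivWithinAt_sum_mul_log _ hx fun j => (hpos j).ne').add
      ((hasDerivWithinAt_id t s).const_mul _)).congr_deriv ?_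
    rw [mul_one, ← Finset.sum_add_distrib]
    refine Finset.sum_congr rfl fun j _ => ?_
    have := (hpos j).ne'
    simp only [Pi.sub_apply]
    field_simp
    ring
  refine monotoneOn_of_hasDerivWithinAt_nonneg hs (fun t ht => (hderiv t ht).continuousWithinAt)
    (fun t ht => (hderiv t (interior_subset ht)).mono interior_subset) fun t ht => ?_
  exact sum_mul_physQ_div_nonneg B hc (hsol t (interior_subset ht)).1

lemma sum_mul_log_le_of_le {ι : Type*} [Fintype ι] {w x M : ι → ℝ} (hw : ∀ j, 0 ≤ w j)
    (hx : ∀ j, 0 < x j) (hM : ∀ j, x j ≤ M j) (i : ι) :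
    ∑ j, w j * Real.log (x j) ≤ w i * Real.log (x i) + ∑ j, w j * Real.log (M j)
      - w i * Real.log (M i) := by
  have := Finset.single_le_sum (f := fun j => w j * (Real.log (M j) - Real.log (x j)))
    (fun j _ => mul_nonneg (hw j) (sub_nonneg.2 (Real.log_le_log (hx j) (hM j))))
    (Finset.mem_univ i)
  simp only [mul_sub, Finset.sum_sub_distrib] at this
  linarith

theorem physarum_limit_positive_on_support_general {m n : ℕ} (A : Matrix (Fin m) (Fin n) ℤ)
    (b : Fin m → ℤ) (c : Fin n → ℤ) (hc : ∀ i, 0 < c i)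
    (T : ℝ) (hT : 0 < T) (x : ℝ → Fin n → ℝ)
    (hsol : IsPhysSolOn (rmat A) (fun j => (b j : ℝ)) (fun i => (c i : ℝ)) x (Set.Ico 0 T))
    (y : Fin n → ℝ) (hyb : rmat A *ᵥ y = fun j => (b j : ℝ)) (hy : ∀ i, 0 ≤ y i)
    (xT : Fin n → ℝ)
    (hlim : Filter.Tendsto x (nhdsWithin T (Set.Ico 0 T)) (nhds xT)) :
    ∀ i, 0 < y i → 0 < xT i := by
  intro i hyi
  rw [← hyb] at hsol
  set w : Fin n → ℝ := fun j => c j * y j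
  set V : ℝ → ℝ := fun t => ∑ j, w j * Real.log (x t j)
  have hc' : ∀ j, (0 : ℝ) < c j := fun j => Int.cast_pos.2 (hc j)
  have hw : ∀ j, 0 ≤ w j := fun j => mul_nonneg (hc' j).le (hy j)
  have hV : ∀ t ∈ Ico 0 T, V 0 - (∑ j, w j) * T ≤ V t := fun t ht => by
    have := hsol.monotoneOn_lyapunov (convex_Ico 0 T) hc' ⟨le_rfl, hT⟩ ht ht.1
    nlinarith [Finset.sum_nonneg fun j (_ : j ∈ Finset.univ) => hw j, ht.2]
  have hup : ∀ᶠ t in 𝓝[Ico 0 T] T, ∀ j, x t j ≤ xT j + 1 := eventually_all.2 fun j =>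
    ((tendsto_pi_nhds.1 hlim j).eventually (gt_mem_nhds (lt_add_one _))).mono fun _ => le_of_lt
  set K := V 0 - (∑ j, w j) * T - ∑ j, w j * Real.log (xT j + 1) + w i * Real.log (xT i + 1)
  have hlow : ∀ᶠ t in 𝓝[Ico 0 T] T, Real.exp (K / w i) ≤ x t i := by
    filter_upwards [hup, self_mem_nhdsWithin] with t hxM ht
    rw [← Real.le_log_iff_exp_le ((hsol t ht).1 i), div_le_iff₀' (mul_pos (hc' i) hyi)]
    linarith [sum_mul_log_le_of_le hw (hsol t ht).1 hxM i, hV t ht]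
  have := right_nhdsWithin_Ico_neBot hT
  exact (Real.exp_pos _).trans_le (ge_of_tendsto (tendsto_pi_nhds.1 hlim i) hlow)

theorem physarum_limit_positive_on_support {m n : ℕ} (A : Matrix (Fin m) (Fin n) ℤ)
    (hrank : (rmat A).rank = m)
    (b : Fin m → ℤ) (c : Fin n → ℤ) (hc : ∀ i, 0 < c i)
    (T : ℝ) (hT : 0 < T) (x : ℝ → Fin n → ℝ)
    (hsol : IsPhysSolOn (rmat A) (fun j => (b j : ℝ)) (fun i => (c i : ℝ)) x (Set.Ico 0 T))
    (y : Fin n → ℝ) (hyb : rmat A *ᵥ y = fun j => (b j : ℝ)) (hy : ∀ i, 0 ≤ y i)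
    (xT : Fin n → ℝ)
    (hlim : Filter.Tendsto x (nhdsWithin T (Set.Ico 0 T)) (nhds xT)) :
    ∀ i, 0 < y i → 0 < xT i :=
  physarum_limit_positive_on_support_general A b c hc T hT x hsol y hyb hy xT hlim
end

section
/- Let x⋆ be an optimal solution of the linear program min{cᵀx : A x = b, x ≥ 0}, and let v be a vertex of the feasible region P = {x : A x = b, x ≥ 0} with cᵀv ≠ cᵀx⋆. Then cᵀv − cᵀx⋆ ≥ 𝒟⁻², where 𝒟 = max{|det A'| : A' is a square submatrix of A}. -/
/-!
Every vertex `v` of `P = {x | A x = b, x ≥ 0}` is determined by a nonsingular square subsystem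
`M v_S = b_R` on its support `S`, so by Cramer's rule `|det M| • v` is an integer vector, with
`|det M| ≤ 𝒟`. Since `c > 0`, the optimal face of `P` is compact, so by Krein–Milman it has an
extreme point `w`, which is a vertex of `P` because the face is an extreme subset of `P`.
If `q₁ v` and `q₂ w` are integral then `q₁ q₂ (cᵀv - cᵀw)` is an integer; it is positive, hence
at least `1`, and `q₁ q₂ ≤ 𝒟²`.
-/

open Matrix Filter Set Topology

theorem isClosed_setOf_mulVec_eq_and_nonneg {m ι : Type*} [Fintype ι] (B : Matrix m ι ℝ)
    (b : m → ℝ) : IsClosed {x | B *ᵥ x = b ∧ ∀ i, 0 ≤ x i} := by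
  simp only [ofPred_and, ofPred_forall]
  exact (isClosed_eq B.mulVecLin.continuous_of_finiteDimensional continuous_const).inter
    (isClosed_iInter fun i => isClosed_le continuous_const (continuous_apply i))

theorem isExtreme_setOf_le_of_forall_le {𝕜 E : Type*} [Field 𝕜] [LinearOrder 𝕜]
    [IsStrictOrderedRing 𝕜] [AddCommGroup E] [Module 𝕜 E] {P : Set E} (l : E →ₗ[𝕜] 𝕜) {t : 𝕜}
    (ht : ∀ z ∈ P, t ≤ l z) : IsExtreme 𝕜 P {x ∈ P | l x ≤ t} := by
  refine ⟨fun x hx => hx.1, fun x₁ hx₁ x₂ hx₂ x ⟨_, hxt⟩ ⟨a, b, ha, hb, hab, hx⟩ => ?_⟩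
  have hl : a * l x₁ + b * l x₂ ≤ t := by simpa [← hx] using hxt
  have ht_eq : a * t + b * t = t := by rw [← add_mul, hab, one_mul]
  refine ⟨hx₁, le_of_not_gt fun hlt => ?_⟩
  nlinarith [mul_pos ha (sub_pos.2 hlt), mul_nonneg hb.le (sub_nonneg.2 (ht x₂ hx₂))]

theorem isCompact_setOf_dotProduct_le {ι : Type*} [Fintype ι] {P : Set (ι → ℝ)}
    (hP : IsClosed P) (hP₀ : ∀ x ∈ P, ∀ i, 0 ≤ x i) {c : ι → ℝ} (hc : ∀ i, 0 < c i) (t : ℝ) :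
    IsCompact {x ∈ P | c ⬝ᵥ x ≤ t} := by
  refine (isCompact_univ_pi fun i => isCompact_Icc (a := 0) (b := t / c i)).of_isClosed_subset
    (hP.inter (isClosed_le (continuous_const.dotProduct continuous_id) continuous_const)) ?_
  rintro x ⟨hxP, hxt⟩ i -
  have hterm : c i * x i ≤ c ⬝ᵥ x :=
    Finset.single_le_sum (f := fun j => c j * x j)
      (fun j _ => mul_nonneg (hc j).le (hP₀ x hxP j)) (Finset.mem_univ i)
  exact ⟨hP₀ x hxP i, (le_div_iff₀' (hc i)).2 (hterm.trans hxt)⟩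

theorem exists_mem_extremePoints_dotProduct_eq_of_forall_le {ι : Type*} [Fintype ι]
    {P : Set (ι → ℝ)} (hP : IsClosed P) (hP₀ : ∀ x ∈ P, ∀ i, 0 ≤ x i) {c : ι → ℝ}
    (hc : ∀ i, 0 < c i) {x₀ : ι → ℝ} (hx₀ : x₀ ∈ P) (hmin : ∀ z ∈ P, c ⬝ᵥ x₀ ≤ c ⬝ᵥ z) :
    ∃ w ∈ extremePoints ℝ P, c ⬝ᵥ w = c ⬝ᵥ x₀ := by
  have hface : IsExtreme ℝ P {x ∈ P | c ⬝ᵥ x ≤ c ⬝ᵥ x₀} :=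
    isExtreme_setOf_le_of_forall_le (dotProductBilin ℝ ℝ c) hmin
  obtain ⟨w, hw⟩ := (isCompact_setOf_dotProduct_le hP hP₀ hc _).extremePoints_nonempty
    ⟨x₀, hx₀, le_rfl⟩
  have hwP := hface.extremePoints_subset_extremePoints hw
  exact ⟨w, hwP, le_antisymm hw.1.2 (hmin w hwP.1)⟩

theorem eq_zero_of_mulVec_eq_zero_of_mem_extremePoints {m ι : Type*} [Fintype ι]
    {B : Matrix m ι ℝ} {b : m → ℝ} {v y : ι → ℝ}
    (hv : v ∈ extremePoints ℝ {x | B *ᵥ x = b ∧ ∀ i, 0 ≤ x i})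
    (hy : B *ᵥ y = 0) (hsupp : ∀ i, v i = 0 → y i = 0) : y = 0 := by
  obtain ⟨⟨hBv, hv0⟩, hext⟩ := hv
  have hnonneg : ∀ᶠ t in 𝓝 (0 : ℝ), ∀ i, 0 ≤ v i + t * y i := by
    refine eventually_all.2 fun i => ?_
    rcases (hv0 i).eq_or_lt with hvi | hvi
    · exact .of_forall fun t => by simp [← hvi, hsupp i hvi.symm]
    · have hcont : Continuous fun t : ℝ => v i + t * y i := by fun_prop
      exact (hcont.tendsto 0).eventually (lt_mem_nhds (by simpa using hvi)) |>.mono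
        fun _ => le_of_lt
  have hnonneg' : ∀ᶠ t in 𝓝 (0 : ℝ), ∀ i, 0 ≤ v i + -t * y i :=
    (continuous_neg.tendsto' 0 0 neg_zero).eventually hnonneg
  obtain ⟨ε, ⟨hplus, hminus⟩, hε⟩ :=
    (((hnonneg.and hnonneg').filter_mono nhdsWithin_le_nhds).and
      (self_mem_nhdsWithin (s := Ioi (0 : ℝ)))).exists
  have hmem : ∀ t : ℝ, (∀ i, 0 ≤ v i + t * y i) →
      v + t • y ∈ {x | B *ᵥ x = b ∧ ∀ i, 0 ≤ x i} := fun t ht =>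
    ⟨by rw [mulVec_add, mulVec_smul, hy, smul_zero, add_zero, hBv], ht⟩
  have hseg : v ∈ openSegment ℝ (v + ε • y) (v + (-ε) • y) :=
    ⟨1 / 2, 1 / 2, by norm_num, by norm_num, by norm_num, by module⟩
  simpa [hε.ne'] using hext (hmem ε hplus) (hmem (-ε) hminus) hseg

theorem linearIndepOn_col_support_of_mem_extremePoints {m ι : Type*} [Fintype ι]
    {B : Matrix m ι ℝ} {b : m → ℝ} {v : ι → ℝ}
    (hv : v ∈ extremePoints ℝ {x | B *ᵥ x = b ∧ ∀ i, 0 ≤ x i}) :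
    LinearIndepOn ℝ B.col (Function.support v) := by
  refine linearIndepOn_iff.2 fun l hl hBl => DFunLike.coe_injective ?_
  refine eq_zero_of_mulVec_eq_zero_of_mem_extremePoints hv ?_ fun i hi =>
    (Finsupp.mem_supported' ℝ l).1 hl i (Function.notMem_support.2 hi)
  rw [← hBl]
  ext r
  simp [mulVec, dotProduct, Finsupp.linearCombination_apply, Finsupp.sum_fintype, mul_comm]

theorem Matrix.exists_isUnit_submatrix_of_linearIndependent_col {m κ K : Type*} [Fintype m]
    [Fintype κ] [DecidableEq κ] [Field K] {B : Matrix m κ K} (h : LinearIndependent K B.col) :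
    ∃ f : κ → m, Function.Injective f ∧ IsUnit (B.submatrix f id) := by
  obtain ⟨τ, a, ha, hspan, hli⟩ := exists_linearIndependent' K B.row
  have : Fintype τ := Fintype.ofInjective a ha
  have hcard : Fintype.card τ = Fintype.card κ := by
    rw [← finrank_span_eq_card hli, hspan, ← rank_eq_finrank_span_row, ← rank_transpose]
    exact LinearIndependent.rank_matrix (M := Bᵀ) h
  let e : τ ≃ κ := Fintype.equivOfCardEq hcard
  refine ⟨a ∘ e.symm, ha.comp e.symm.injective, ?_⟩
  rw [← linearIndependent_rows_iff_isUnit]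
  exact hli.comp e.symm e.symm.injective

theorem Matrix.mulVec_eq_submatrix_mulVec_of_support_subset {m ι R : Type*} [Fintype ι]
    [NonUnitalNonAssocSemiring R] (B : Matrix m ι R) {v : ι → R} {S : Set ι} [Fintype S]
    (hS : Function.support v ⊆ S) :
    B *ᵥ v = B.submatrix id ((↑) : S → ι) *ᵥ fun s => v s := by
  classical
  ext r
  simp only [mulVec, dotProduct, submatrix_apply, id]
  rw [← Finset.sum_subtype S.toFinset (by simp) (fun i => B r i * v i)]
  refine (Finset.sum_subset (Finset.subset_univ _) fun i _ hi => ?_).symm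
  rw [show v i = 0 from Function.notMem_support.1 fun h => hi (by simpa using hS h), mul_zero]

theorem Matrix.map_det_smul_eq_comp_adjugate_mulVec {κ R S : Type*} [Fintype κ] [DecidableEq κ]
    [CommRing R] [CommRing S] (f : R →+* S) {M : Matrix κ κ R} {u : κ → S} {β : κ → R}
    (h : M.map f *ᵥ u = f ∘ β) : f M.det • u = f ∘ (M.adjugate *ᵥ β) := by
  have hadj : (M.map f).adjugate = M.adjugate.map f := (f.map_adjugate M).symm
  calc f M.det • u = (M.map f).adjugate *ᵥ (M.map f *ᵥ u) := by
        rw [mulVec_mulVec, adjugate_mul, smul_mulVec, one_mulVec, f.map_det]; rfl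
    _ = f ∘ (M.adjugate *ᵥ β) := by
        rw [h, hadj]; funext i; exact (f.map_mulVec _ _ i).symm

theorem abs_det_submatrix_mem_subdets {m n : ℕ} {κ : Type*} [Fintype κ] [DecidableEq κ]
    (A : Matrix (Fin m) (Fin n) ℤ) {f : κ → Fin m} {g : κ → Fin n}
    (hf : Function.Injective f) (hg : Function.Injective g) :
    |((A.submatrix f g).det : ℝ)| ∈ subdets A := by
  let e := (Fintype.equivFin κ).symm
  refine ⟨Fintype.card κ, f ∘ e, g ∘ e, hf.comp e.injective, hg.comp e.injective, ?_⟩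
  rw [← det_submatrix_equiv_self e (A.submatrix f g)]
  rfl

theorem exists_mem_subdets_mul_eq_intCast_of_mem_extremePoints {m n : ℕ}
    (A : Matrix (Fin m) (Fin n) ℤ) (b : Fin m → ℤ) {v : Fin n → ℝ}
    (hv : v ∈ extremePoints ℝ
      {x : Fin n → ℝ | (rmat A *ᵥ x = fun j => (b j : ℝ)) ∧ ∀ i, 0 ≤ x i}) :
    ∃ q : ℤ, 0 < q ∧ (q : ℝ) ∈ subdets A ∧ ∃ z : Fin n → ℤ, ∀ i, q * v i = z i := by
  classical
  let S := Function.support v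
  obtain ⟨f, hf, hunit⟩ := Matrix.exists_isUnit_submatrix_of_linearIndependent_col
    (B := (rmat A).submatrix id ((↑) : S → Fin n))
    (linearIndepOn_col_support_of_mem_extremePoints hv)
  set M := A.submatrix f ((↑) : S → Fin n)
  have hMmap : ((rmat A).submatrix id ((↑) : S → Fin n)).submatrix f id =
      M.map (Int.castRingHom ℝ) := rfl
  have hdet : M.det ≠ 0 := by
    rw [hMmap, isUnit_iff_isUnit_det, Int.coe_castRingHom, ← Int.cast_det, isUnit_iff_ne_zero]
      at hunit
    exact_mod_cast hunit
  have hMv : M.map (Int.castRingHom ℝ) *ᵥ (fun s : S => v s) = Int.castRingHom ℝ ∘ (b ∘ f) := by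
    funext r
    rw [← hMmap]
    change ((rmat A).submatrix id ((↑) : S → Fin n) *ᵥ fun s : S => v s) (f r) = b (f r)
    rw [← mulVec_eq_submatrix_mulVec_of_support_subset _ subset_rfl, hv.1.1]
  have hcramer := congrFun (Matrix.map_det_smul_eq_comp_adjugate_mulVec _ hMv)
  refine ⟨|M.det|, abs_pos.2 hdet, ?_, ?_⟩
  · rw [Int.cast_abs]
    exact abs_det_submatrix_mem_subdets A hf Subtype.val_injective
  · have habs : |M.det| = M.det.sign * M.det := by rw [Int.sign_mul_self, Int.natCast_natAbs]
    refine ⟨fun i => if hi : v i = 0 then 0 else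
      M.det.sign * (M.adjugate *ᵥ (b ∘ f)) ⟨i, hi⟩, fun i => ?_⟩
    by_cases hi : v i = 0
    · simp [hi]
    · have := hcramer ⟨i, hi⟩
      simp only [Pi.smul_apply, smul_eq_mul, eq_intCast, Function.comp_apply] at this
      simp only [hi, dite_false, habs]
      rw [Int.cast_mul, Int.cast_mul, mul_assoc, this]

theorem mul_dotProduct_eq_intCast {ι : Type*} [Fintype ι] (c : ι → ℤ) {q : ℤ} {u : ι → ℝ}
    {z : ι → ℤ} (hz : ∀ i, q * u i = z i) :
    q * ((fun i => (c i : ℝ)) ⬝ᵥ u) = ((c ⬝ᵥ z : ℤ) : ℝ) := by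
  simp only [dotProduct, Finset.mul_sum, Int.cast_sum, Int.cast_mul, ← hz]
  exact Finset.sum_congr rfl fun i _ => by ring

theorem inv_le_dotProduct_sub_of_mul_intCast {ι : Type*} [Fintype ι] (c : ι → ℤ) {q₁ q₂ : ℤ}
    (hq₁ : 0 < q₁) (hq₂ : 0 < q₂) {u w : ι → ℝ} {z₁ z₂ : ι → ℤ}
    (hz₁ : ∀ i, q₁ * u i = z₁ i) (hz₂ : ∀ i, q₂ * w i = z₂ i)
    (hlt : (fun i => (c i : ℝ)) ⬝ᵥ w < (fun i => (c i : ℝ)) ⬝ᵥ u) :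
    ((q₁ * q₂ : ℤ) : ℝ)⁻¹ ≤ (fun i => (c i : ℝ)) ⬝ᵥ u - (fun i => (c i : ℝ)) ⬝ᵥ w := by
  have hq : (0 : ℝ) < (q₁ * q₂ : ℤ) := by exact_mod_cast mul_pos hq₁ hq₂
  have hint : ((q₁ * q₂ : ℤ) : ℝ) * ((fun i => (c i : ℝ)) ⬝ᵥ u - (fun i => (c i : ℝ)) ⬝ᵥ w) =
      ((q₂ * (c ⬝ᵥ z₁) - q₁ * (c ⬝ᵥ z₂) : ℤ) : ℝ) := by
    push_cast
    rw [← mul_dotProduct_eq_intCast c hz₁, ← mul_dotProduct_eq_intCast c hz₂]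
    ring
  have hpos : 0 < q₂ * (c ⬝ᵥ z₁) - q₁ * (c ⬝ᵥ z₂) := by
    rw [← Int.cast_pos (R := ℝ), ← hint]
    exact mul_pos hq (sub_pos.2 hlt)
  rw [inv_le_iff_one_le_mul₀' hq, hint]
  exact_mod_cast hpos

theorem nonoptimal_vertex_cost_gap_general {m n : ℕ} (A : Matrix (Fin m) (Fin n) ℤ)
    (b : Fin m → ℤ) (c : Fin n → ℤ) (hc : ∀ i, 0 < c i)
    (𝒟 : ℝ) (hD : IsGreatest (subdets A) 𝒟)
    (xstar : Fin n → ℝ)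
    (hxs : (rmat A *ᵥ xstar = fun j => (b j : ℝ)) ∧ ∀ i, 0 ≤ xstar i)
    (hopt : ∀ z : Fin n → ℝ, (rmat A *ᵥ z = fun j => (b j : ℝ)) → (∀ i, 0 ≤ z i) →
      (fun i => (c i : ℝ)) ⬝ᵥ xstar ≤ (fun i => (c i : ℝ)) ⬝ᵥ z)
    (v : Fin n → ℝ)
    (hv : v ∈ Set.extremePoints ℝ
      {x : Fin n → ℝ | (rmat A *ᵥ x = fun j => (b j : ℝ)) ∧ ∀ i, 0 ≤ x i})
    (hne : (fun i => (c i : ℝ)) ⬝ᵥ v ≠ (fun i => (c i : ℝ)) ⬝ᵥ xstar) :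
    (𝒟 ^ 2)⁻¹ ≤ (fun i => (c i : ℝ)) ⬝ᵥ v - (fun i => (c i : ℝ)) ⬝ᵥ xstar := by
  obtain ⟨w, hw, hcw⟩ := exists_mem_extremePoints_dotProduct_eq_of_forall_le
    (isClosed_setOf_mulVec_eq_and_nonneg _ _) (fun x hx => hx.2)
    (fun i => Int.cast_pos.2 (hc i)) hxs fun z hz => hopt z hz.1 hz.2
  obtain ⟨q₁, hq₁, hq₁D, z₁, hz₁⟩ := exists_mem_subdets_mul_eq_intCast_of_mem_extremePoints A b hv
  obtain ⟨q₂, hq₂, hq₂D, z₂, hz₂⟩ := exists_mem_subdets_mul_eq_intCast_of_mem_extremePoints A b hw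
  have hlt : (fun i => (c i : ℝ)) ⬝ᵥ w < (fun i => (c i : ℝ)) ⬝ᵥ v :=
    hcw ▸ (hopt v hv.1.1 hv.1.2).lt_of_ne hne.symm
  have hq₁pos : (0 : ℝ) < q₁ := Int.cast_pos.2 hq₁
  have hq₂pos : (0 : ℝ) < q₂ := Int.cast_pos.2 hq₂
  have hq : ((q₁ * q₂ : ℤ) : ℝ) ≤ 𝒟 ^ 2 := by
    rw [Int.cast_mul, sq]
    exact mul_le_mul (hD.2 hq₁D) (hD.2 hq₂D) hq₂pos.le (hq₁pos.trans_le (hD.2 hq₁D)).le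
  calc (𝒟 ^ 2)⁻¹ ≤ ((q₁ * q₂ : ℤ) : ℝ)⁻¹ := inv_anti₀ (by positivity) hq
    _ ≤ _ := hcw ▸ inv_le_dotProduct_sub_of_mul_intCast c hq₁ hq₂ hz₁ hz₂ hlt

theorem nonoptimal_vertex_cost_gap {m n : ℕ} (A : Matrix (Fin m) (Fin n) ℤ)
    (hrank : (rmat A).rank = m)
    (b : Fin m → ℤ) (c : Fin n → ℤ) (hc : ∀ i, 0 < c i)
    (𝒟 : ℝ) (hD : IsGreatest (subdets A) 𝒟)
    (xstar : Fin n → ℝ)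
    (hxs : (rmat A *ᵥ xstar = fun j => (b j : ℝ)) ∧ ∀ i, 0 ≤ xstar i)
    (hopt : ∀ z : Fin n → ℝ, (rmat A *ᵥ z = fun j => (b j : ℝ)) → (∀ i, 0 ≤ z i) →
      (fun i => (c i : ℝ)) ⬝ᵥ xstar ≤ (fun i => (c i : ℝ)) ⬝ᵥ z)
    (v : Fin n → ℝ)
    (hv : v ∈ Set.extremePoints ℝ
      {x : Fin n → ℝ | (rmat A *ᵥ x = fun j => (b j : ℝ)) ∧ ∀ i, 0 ≤ x i})
    (hne : (fun i => (c i : ℝ)) ⬝ᵥ v ≠ (fun i => (c i : ℝ)) ⬝ᵥ xstar) :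
    (𝒟 ^ 2)⁻¹ ≤ (fun i => (c i : ℝ)) ⬝ᵥ v - (fun i => (c i : ℝ)) ⬝ᵥ xstar :=
  nonoptimal_vertex_cost_gap_general A b c hc 𝒟 hD xstar hxs hopt v hv hne
end

section
/- Suppose x : [0,∞) → ℝⁿ_{>0} is a solution of the Physarum dynamics ẋ = q − x, and let p(t) denote the solution of (A W(t) Aᵀ) p(t) = b where W(t) = diag(x₁(t)/c₁,…,xₙ(t)/cₙ). Then ‖Aᵀ p(t)‖_∞ is uniformly bounded over t ∈ [0,∞), i.e., there exists a constant M (depending only on A, b, c, and x(0)) such that ‖Aᵀ p(t)‖_∞ ≤ M for all t ≥ 0. -/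
/-!
Write `L = A W Aᵀ`, so that `p = L⁻¹ b`. Expanding determinants multilinearly (Cauchy–Binet),
`det L = ∑_S det (A_S)² ∏_{j ∈ S} w_j` over column bases `S`, while by Cramer's rule each `p_k`
is a combination of the monomials `∏_{j ∈ T} w_j` divided by `det L`, where `T` runs over the
sets of `m - 1` independent columns that form a basis together with `b`. Hence `p` is bounded
as long as every such `T` extends to a column basis `T ∪ {j}` with `w_j` bounded below.

Along the dynamics `d/dt (A x) = A q - A x = b - A x`, so `A x(t) → b`. For each such `T`, a
functional `ψ` vanishing on the columns of `T` with `ψ b = 1` therefore eventually satisfies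
`∑_j x_j ψ(A e_j) = ψ (A x) > 1/2`, which produces a column `j ∉ span T` with `x_j` bounded below.
On the remaining compact time interval `p` is continuous, hence bounded.
-/

open Matrix Filter Set Topology

open Finset

namespace Matrix

section CauchyBinet

variable {κ ι R : Type*} [Fintype κ] [CommRing R]

lemma injective_of_det_submatrix_ne_zero [DecidableEq κ] {Y : Matrix κ ι R} {r : κ → ι}
    (h : (Y.submatrix id r).det ≠ 0) : Function.Injective r := by
  intro l₁ l₂ he
  by_contra hne
  exact h (det_zero_of_column_eq hne fun k => by simp [he])

variable [Fintype ι] [DecidableEq ι]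

lemma mul_diagonal_indicator_mul_transpose (X : Matrix κ ι R) {S : Finset ι} (e : κ ≃ S) :
    X * diagonal (fun j => if j ∈ S then (1 : R) else 0) * Xᵀ =
      X.submatrix id (fun l => (e l : ι)) * (X.submatrix id (fun l => (e l : ι)))ᵀ := by
  ext k l
  rw [mul_apply]
  simp only [mul_diagonal, transpose_apply, mul_ite, mul_one, mul_zero, ite_mul, zero_mul]
  rw [← sum_filter, filter_mem_eq_inter, Finset.univ_inter, ← sum_coe_sort S]
  exact (e.sum_comp fun j : S => X k j * X l j).symm

variable [DecidableEq κ]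

/-- By the Cauchy–Binet formula this is `det X_S * det Y_S` when `#S = card κ`, and `0`
otherwise; defining it through the expansion avoids choosing an ordering of `S`. -/
def cauchyBinetCoeff (X Y : Matrix κ ι R) (S : Finset ι) : R :=
  ∑ r : κ → ι with Finset.univ.image r = S, (∏ l, X l (r l)) * (Y.submatrix id r).det

lemma det_mul_diagonal_mul_transpose_eq_sum (X Y : Matrix κ ι R) (u : ι → R) :
    (X * diagonal u * Yᵀ).det = ∑ S : Finset ι, cauchyBinetCoeff X Y S * ∏ j ∈ S, u j := by
  have hrows : X * diagonal u * Yᵀ = fun l => ∑ j, (X l j * u j) • Yᵀ j := by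
    ext l k
    rw [mul_apply]
    simp only [mul_diagonal, transpose_apply, Finset.sum_apply, Pi.smul_apply, smul_eq_mul]
  have hexpand : (X * diagonal u * Yᵀ).det =
      ∑ r : κ → ι, (∏ l, X l (r l) * u (r l)) * (Y.submatrix id r).det := by
    rw [hrows]
    change (detRowAlternating : (κ → R) [⋀^κ]→ₗ[R] R).toMultilinearMap _ = _
    rw [MultilinearMap.map_sum]
    refine sum_congr rfl fun r _ => ?_
    rw [MultilinearMap.map_smul_univ, smul_eq_mul, ← det_transpose (Y.submatrix id r)]
    rfl
  rw [hexpand, ← sum_fiberwise univ (fun r : κ → ι => Finset.univ.image r)]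
  refine sum_congr rfl fun S _ => ?_
  rw [cauchyBinetCoeff, sum_mul]
  refine sum_congr rfl fun r hr => ?_
  rw [(mem_filter.mp hr).2.symm]
  by_cases hinj : Function.Injective r
  · rw [prod_image fun _ _ _ _ h => hinj h, prod_mul_distrib]
    ring
  · have hdet : (Y.submatrix id r).det = 0 := by
      by_contra h
      exact hinj (injective_of_det_submatrix_ne_zero h)
    simp [hdet]

lemma exists_of_cauchyBinetCoeff_ne_zero {X Y : Matrix κ ι R} {S : Finset ι}
    (h : cauchyBinetCoeff X Y S ≠ 0) :
    ∃ r : κ → ι, Finset.univ.image r = S ∧ (∀ l, X l (r l) ≠ 0) ∧ (Y.submatrix id r).det ≠ 0 := by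
  obtain ⟨r, hr, hne⟩ := exists_ne_zero_of_sum_ne_zero h
  refine ⟨r, (mem_filter.mp hr).2, fun l hl => ?_, right_ne_zero_of_mul hne⟩
  exact left_ne_zero_of_mul hne (prod_eq_zero (mem_univ l) hl)

lemma card_eq_of_cauchyBinetCoeff_ne_zero {X Y : Matrix κ ι R} {S : Finset ι}
    (h : cauchyBinetCoeff X Y S ≠ 0) : #S = Fintype.card κ := by
  obtain ⟨r, rfl, -, hdet⟩ := exists_of_cauchyBinetCoeff_ne_zero h
  rw [card_image_of_injective _ (injective_of_det_submatrix_ne_zero hdet), card_univ]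

lemma linearIndepOn_of_cauchyBinetCoeff_ne_zero {K : Type*} [Field K] {X Y : Matrix κ ι K}
    {S : Finset ι} (h : cauchyBinetCoeff X Y S ≠ 0) : LinearIndepOn K Yᵀ (S : Set ι) := by
  obtain ⟨r, rfl, -, hdet⟩ := exists_of_cauchyBinetCoeff_ne_zero h
  have hcols : LinearIndependent K (Yᵀ ∘ r) :=
    linearIndependent_cols_iff_isUnit.mpr ((isUnit_iff_isUnit_det _).mpr hdet.isUnit)
  rw [coe_image, coe_univ, Set.image_univ]
  exact (linearIndepOn_range_iff (injective_of_det_submatrix_ne_zero hdet) _).mpr hcols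

lemma cauchyBinetCoeff_self_eq_sq (X : Matrix κ ι R) {S : Finset ι} (e : κ ≃ S) :
    cauchyBinetCoeff X X S = (X.submatrix id (fun l => (e l : ι))).det ^ 2 := by
  have hcard : #S = Fintype.card κ := by simpa using (Fintype.card_congr e).symm
  -- evaluate the expansion at the indicator of `S`: only `S` itself survives
  have h := det_mul_diagonal_mul_transpose_eq_sum X X fun j => if j ∈ S then (1 : R) else 0
  rw [mul_diagonal_indicator_mul_transpose X e, det_mul, det_transpose, ← sq] at h
  rw [h, sum_eq_single S]
  · rw [prod_boole, if_pos fun _ hj => hj, mul_one]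
  · intro S' _ hne
    rw [prod_boole]
    split_ifs with hsub
    · rw [mul_one]
      by_contra h'
      exact hne (eq_of_subset_of_card_le hsub
        (by rw [card_eq_of_cauchyBinetCoeff_ne_zero h', hcard]))
    · rw [mul_zero]
  · simp

end CauchyBinet

section Ordered

variable {κ ι K : Type*} [Fintype κ] [DecidableEq κ] [Fintype ι] [DecidableEq ι]
  [Field K] [LinearOrder K] [IsStrictOrderedRing K]

lemma cauchyBinetCoeff_self_nonneg (X : Matrix κ ι K) (S : Finset ι) :
    0 ≤ cauchyBinetCoeff X X S := by
  by_cases hS : #S = Fintype.card κ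
  · rw [cauchyBinetCoeff_self_eq_sq X (Fintype.equivOfCardEq (by simp [hS]))]
    exact sq_nonneg _
  · by_contra h
    exact hS (card_eq_of_cauchyBinetCoeff_ne_zero (ne_of_not_le h).symm)

lemma cauchyBinetCoeff_self_pos {X : Matrix κ ι K} {S : Finset ι}
    (hS : LinearIndepOn K Xᵀ (S : Set ι)) (hcard : #S = Fintype.card κ) :
    0 < cauchyBinetCoeff X X S := by
  let e : κ ≃ S := Fintype.equivOfCardEq (by simp [hcard])
  have hunit : IsUnit (X.submatrix id fun l => (e l : ι)) :=
    linearIndependent_cols_iff_isUnit.mp (hS.comp e e.injective)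
  rw [cauchyBinetCoeff_self_eq_sq X e]
  exact sq_pos_of_ne_zero ((isUnit_iff_isUnit_det _).mp hunit).ne_zero

lemma exists_pos_le_cauchyBinetCoeff_self (X : Matrix κ ι K) :
    ∃ c > 0, ∀ S : Finset ι, LinearIndepOn K Xᵀ (S : Set ι) → #S = Fintype.card κ →
      c ≤ cauchyBinetCoeff X X S := by
  classical
  obtain ⟨S₀, -, hS₀⟩ := exists_min_image univ (fun S : Finset ι =>
    if LinearIndepOn K Xᵀ (S : Set ι) ∧ #S = Fintype.card κ then cauchyBinetCoeff X X S else 1)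
    univ_nonempty
  refine ⟨_, ?_, fun S hS hcard => (hS₀ S (mem_univ S)).trans_eq (if_pos ⟨hS, hcard⟩)⟩
  split_ifs with h
  exacts [cauchyBinetCoeff_self_pos h.1 h.2, one_pos]

lemma cauchyBinetCoeff_self_mul_prod_le_det (X : Matrix κ ι K) {u : ι → K} (hu : ∀ j, 0 ≤ u j)
    (S : Finset ι) : cauchyBinetCoeff X X S * ∏ j ∈ S, u j ≤ (X * diagonal u * Xᵀ).det := by
  rw [det_mul_diagonal_mul_transpose_eq_sum]
  exact single_le_sum (f := fun S => cauchyBinetCoeff X X S * ∏ j ∈ S, u j)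
    (fun S _ => mul_nonneg (cauchyBinetCoeff_self_nonneg X S) (prod_nonneg fun j _ => hu j))
    (mem_univ S)

end Ordered

lemma linearIndependent_row_of_rank_eq_card {κ ι K : Type*} [Fintype κ] [Fintype ι] [Field K]
    {A : Matrix κ ι K} (h : A.rank = Fintype.card κ) : LinearIndependent K A.row :=
  linearIndependent_iff_card_eq_finrank_span.mpr (h.symm.trans A.rank_eq_finrank_span_row)

lemma inv_mulVec_apply {κ K : Type*} [Fintype κ] [DecidableEq κ] [Field K] {A : Matrix κ κ K}
    (hA : A.det ≠ 0) (b : κ → K) (k : κ) : (A⁻¹ *ᵥ b) k = (A.updateCol k b).det / A.det := by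
  rw [eq_div_iff hA, mul_comm, ← cramer_apply, ← det_smul_inv_mulVec_eq_cramer A b hA.isUnit]
  rfl

end Matrix

lemma linearIndepOn_insertNone_iff {K V ι : Type*} [Field K] [AddCommGroup V] [Module K V]
    (b : V) (f : ι → V) (T : Finset ι) :
    LinearIndepOn K (Option.elim' b f) (insertNone T : Set (Option ι)) ↔
      LinearIndepOn K f (T : Set ι) ∧ b ∉ Submodule.span K (f '' T) := by
  have hcoe : (insertNone T : Set (Option ι)) = insert none (some '' (T : Set ι)) := by
    ext (_ | j) <;> simp
  rw [hcoe, linearIndepOn_insert (by simp), Set.image_image]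
  exact and_congr ⟨fun h => h.comp_of_image (Option.some_injective ι).injOn,
    fun h => h.image_of_comp some (Option.elim' b f)⟩ Iff.rfl

namespace Matrix

variable {κ ι : Type*} [Fintype ι] [DecidableEq ι]

def augment {R : Type*} (B : Matrix κ ι R) (b : κ → R) : Matrix κ (Option ι) R :=
  of fun l o => o.elim' (b l) (B l)

lemma transpose_updateCol_eq_augment_mul [DecidableEq κ] {R : Type*} [CommRing R]
    (B : Matrix κ ι R) (b : κ → R) (u : ι → R) (k : κ) :
    ((B * diagonal u * Bᵀ).updateCol k b)ᵀ =
      (B.updateRow k 0).augment (Pi.single k 1) * diagonal (Option.elim' 1 u) *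
        (B.augment b)ᵀ := by
  ext l l'
  simp only [transpose_apply, updateCol_apply, mul_apply, Fintype.sum_option, augment, of_apply]
  by_cases h : l = k <;> simp [h, diagonal_apply, mul_comm, mul_left_comm]

variable [Fintype κ]

def FormsBasisWith {K : Type*} [Field K] (B : Matrix κ ι K) (b : κ → K) (T : Finset ι) : Prop :=
  LinearIndepOn K Bᵀ (T : Set ι) ∧ b ∉ Submodule.span K (Bᵀ '' T) ∧ #T + 1 = Fintype.card κ

variable [DecidableEq κ]

lemma formsBasisWith_eraseNone_of_cauchyBinetCoeff_ne_zero {K : Type*} [Field K]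
    {B : Matrix κ ι K} {b : κ → K} {k : κ} {S : Finset (Option ι)}
    (h : cauchyBinetCoeff ((B.updateRow k 0).augment (Pi.single k 1)) (B.augment b) S ≠ 0) :
    B.FormsBasisWith b (eraseNone S) := by
  have hnone : none ∈ S := by
    obtain ⟨r, rfl, hX, -⟩ := exists_of_cauchyBinetCoeff_ne_zero h
    refine mem_image.mpr ⟨k, mem_univ k, ?_⟩
    have := hX k
    cases hr : r k <;> simp_all [augment]
  have hS : insertNone (eraseNone S) = S := by
    rw [insertNone_eraseNone, Finset.insert_eq_of_mem hnone]
  have hindep := linearIndepOn_of_cauchyBinetCoeff_ne_zero h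
  have hcard := card_eq_of_cauchyBinetCoeff_ne_zero h
  rw [show (B.augment b)ᵀ = Option.elim' b Bᵀ by ext (_ | j) l <;> rfl, ← hS] at hindep
  rw [← hS, card_insertNone] at hcard
  obtain ⟨hT, hb⟩ := (linearIndepOn_insertNone_iff b Bᵀ _).mp hindep
  exact ⟨hT, hb, hcard⟩

lemma exists_abs_det_updateCol_le (B : Matrix κ ι ℝ) (b : κ → ℝ) :
    ∃ C ≥ 0, ∀ u : ι → ℝ, (∀ j, 0 ≤ u j) → ∀ D, 0 ≤ D →
      (∀ T, B.FormsBasisWith b T → ∏ j ∈ T, u j ≤ D) →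
      ∀ k, |((B * diagonal u * Bᵀ).updateCol k b).det| ≤ C * D := by
  set γ : κ → Finset (Option ι) → ℝ := fun k S =>
    |cauchyBinetCoeff ((B.updateRow k 0).augment (Pi.single k 1)) (B.augment b) S|
  refine ⟨∑ k, ∑ S, γ k S, by positivity, fun u hu D hD hprod k => ?_⟩
  have hterm : ∀ S, γ k S * ∏ j ∈ eraseNone S, u j ≤ γ k S * D := by
    intro S
    by_cases h : γ k S = 0
    · simp [h]
    · exact mul_le_mul_of_nonneg_left
        (hprod _ (formsBasisWith_eraseNone_of_cauchyBinetCoeff_ne_zero (abs_ne_zero.mp h)))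
        (abs_nonneg _)
  calc |((B * diagonal u * Bᵀ).updateCol k b).det|
      = |∑ S, cauchyBinetCoeff ((B.updateRow k 0).augment (Pi.single k 1)) (B.augment b) S *
          ∏ j ∈ eraseNone S, u j| := by
        rw [← det_transpose, transpose_updateCol_eq_augment_mul,
          det_mul_diagonal_mul_transpose_eq_sum]
        simp_rw [prod_eraseNone]
    _ ≤ ∑ S, γ k S * ∏ j ∈ eraseNone S, u j := (abs_sum_le_sum_abs _ _).trans_eq <|
        sum_congr rfl fun S _ => by rw [abs_mul, abs_of_nonneg (prod_nonneg fun j _ => hu j)]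
    _ ≤ (∑ S, γ k S) * D := by rw [sum_mul]; exact sum_le_sum fun S _ => hterm S
    _ ≤ (∑ k, ∑ S, γ k S) * D := by
        gcongr
        exact single_le_sum (f := fun k => ∑ S, γ k S) (fun _ _ => by positivity) (mem_univ k)

lemma det_mul_diagonal_mul_transpose_pos {B : Matrix κ ι ℝ} (hB : LinearIndependent ℝ B.row)
    {u : ι → ℝ} (hu : ∀ j, 0 < u j) : 0 < (B * diagonal u * Bᵀ).det := by
  have h := (posDef_diagonal_iff.mpr hu).mul_mul_conjTranspose_same (vecMul_injective_iff.mpr hB)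
  rw [conjTranspose_eq_transpose_of_trivial] at h
  exact h.det_pos

lemma exists_norm_inv_mulVec_le {B : Matrix κ ι ℝ} (hB : LinearIndependent ℝ B.row) (b : κ → ℝ)
    {ε : ℝ} (hε : 0 < ε) :
    ∃ M, ∀ u : ι → ℝ, (∀ j, 0 < u j) →
      (∀ T, B.FormsBasisWith b T → ∃ j, ε ≤ u j ∧ Bᵀ j ∉ Submodule.span ℝ (Bᵀ '' T)) →
      ‖(B * diagonal u * Bᵀ)⁻¹ *ᵥ b‖ ≤ M := by
  obtain ⟨C, hC0, hC⟩ := exists_abs_det_updateCol_le B b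
  obtain ⟨c, hc, hcle⟩ := exists_pos_le_cauchyBinetCoeff_self B
  refine ⟨C / (c * ε), fun u hu hcover => ?_⟩
  have hΔ := det_mul_diagonal_mul_transpose_pos hB hu
  have hprod : ∀ T, B.FormsBasisWith b T →
      ∏ j ∈ T, u j ≤ (B * diagonal u * Bᵀ).det / (c * ε) := by
    intro T hT
    obtain ⟨j, hεj, hj⟩ := hcover T hT
    have hjT : j ∉ T := fun h => hj (Submodule.subset_span (Set.mem_image_of_mem _ h))
    have hcj : c ≤ cauchyBinetCoeff B B (insert j T) :=
      hcle _ (by rw [coe_insert]; exact hT.1.insert hj) (by rw [card_insert_of_notMem hjT, hT.2.2])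
    have hle := cauchyBinetCoeff_self_mul_prod_le_det B (fun j => (hu j).le) (insert j T)
    have hT0 : 0 ≤ ∏ j ∈ T, u j := prod_nonneg fun j _ => (hu j).le
    rw [prod_insert hjT] at hle
    rw [le_div_iff₀ (mul_pos hc hε)]
    calc (∏ j ∈ T, u j) * (c * ε) = c * (ε * ∏ j ∈ T, u j) := by ring
      _ ≤ cauchyBinetCoeff B B (insert j T) * (u j * ∏ j ∈ T, u j) := by
        gcongr
        exact cauchyBinetCoeff_self_nonneg B _
      _ ≤ _ := hle
  refine (pi_norm_le_iff_of_nonneg (by positivity)).mpr fun k => ?_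
  rw [Real.norm_eq_abs, inv_mulVec_apply hΔ.ne', abs_div, abs_of_pos hΔ, div_le_iff₀ hΔ]
  calc _ ≤ C * ((B * diagonal u * Bᵀ).det / (c * ε)) :=
        hC u (fun j => (hu j).le) _ (by positivity) hprod k
    _ = C / (c * ε) * (B * diagonal u * Bᵀ).det := by ring

end Matrix

lemma Matrix.exists_forall_abs_mulVec_le {κ ι α : Type*} [Fintype κ] [Fintype ι]
    (B : Matrix κ ι ℝ) {v : α → ι → ℝ} {s : Set α} {C : ℝ} (hv : ∀ t ∈ s, ‖v t‖ ≤ C) :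
    ∃ M, ∀ t ∈ s, ∀ k, |(B *ᵥ v t) k| ≤ M := by
  let L := LinearMap.toContinuousLinearMap B.mulVecLin
  refine ⟨‖L‖ * C, fun t ht k => ?_⟩
  calc |(B *ᵥ v t) k| ≤ ‖B *ᵥ v t‖ := by
        simpa only [Real.norm_eq_abs] using norm_le_pi_norm (B *ᵥ v t) k
    _ = ‖L (v t)‖ := rfl
    _ ≤ ‖L‖ * C := (L.le_opNorm _).trans (by gcongr; exact hv t ht)

lemma exists_pos_le_of_le_sum_mul {ι : Type*} [Fintype ι] [Nonempty ι] {y a : ι → ℝ} {δ Θ : ℝ}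
    (hδ : 0 < δ) (hy : ∀ j, 0 ≤ y j) (ha : ∀ j, a j ≤ Θ) (h : δ ≤ ∑ j, y j * a j) :
    ∃ j, 0 < a j ∧ δ / (Fintype.card ι * Θ) ≤ y j := by
  have hcard : (0 : ℝ) < Fintype.card ι := by exact_mod_cast Fintype.card_pos
  obtain ⟨j, -, hj⟩ := exists_le_of_sum_le univ_nonempty (f := fun _ => δ / Fintype.card ι)
    (g := fun j => y j * a j)
    (by rwa [sum_const, card_univ, nsmul_eq_mul, mul_div_cancel₀ _ hcard.ne'])
  have haj : 0 < a j := pos_of_mul_pos_right ((div_pos hδ hcard).trans_le hj) (hy j)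
  refine ⟨j, haj, ?_⟩
  rw [div_le_iff₀ (mul_pos hcard (haj.trans_le (ha j)))]
  calc δ ≤ Fintype.card ι * (y j * a j) := by rwa [div_le_iff₀' hcard] at hj
    _ ≤ Fintype.card ι * (y j * Θ) := by gcongr; exacts [hy j, ha j]
    _ = y j * (Fintype.card ι * Θ) := by ring

lemma exists_linearMap_eq_one_of_notMem {K V : Type*} [Field K] [AddCommGroup V] [Module K V]
    {p : Submodule K V} {v : V} (hv : v ∉ p) : ∃ ψ : V →ₗ[K] K, ψ v = 1 ∧ ∀ w ∈ p, ψ w = 0 := by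
  obtain ⟨ψ, hψp, hψv⟩ := LinearMap.exists_extend_of_notMem 0 hv (1 : K)
  exact ⟨ψ, hψv, fun w hw => by simpa using LinearMap.congr_fun hψp ⟨w, hw⟩⟩

lemma Matrix.exists_pos_eventually_nhds_forall_formsBasisWith {κ ι : Type*} [Fintype κ]
    [Fintype ι] [DecidableEq ι] [Nonempty ι] (B : Matrix κ ι ℝ) (b : κ → ℝ) {c : ι → ℝ}
    (hc : ∀ j, 0 < c j) :
    ∃ ε > 0, ∀ᶠ z in 𝓝 b, ∀ y : ι → ℝ, B *ᵥ y = z → (∀ j, 0 ≤ y j) → ∀ T,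
      B.FormsBasisWith b T → ∃ j, ε ≤ y j / c j ∧ Bᵀ j ∉ Submodule.span ℝ (Bᵀ '' T) := by
  have hsep : ∀ T : Finset ι, ∃ ψ : (κ → ℝ) →ₗ[ℝ] ℝ, B.FormsBasisWith b T →
      ψ b = 1 ∧ ∀ w ∈ Submodule.span ℝ (Bᵀ '' T), ψ w = 0 := fun T => by
    by_cases hT : B.FormsBasisWith b T
    · obtain ⟨ψ, hψ⟩ := exists_linearMap_eq_one_of_notMem hT.2.1
      exact ⟨ψ, fun _ => hψ⟩
    · exact ⟨0, fun h => absurd h hT⟩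
  choose ψ hψ using hsep
  obtain ⟨Θ₀, hΘ₀⟩ := (Set.finite_range fun P : Finset ι × ι => c P.2 * ψ P.1 (Bᵀ P.2)).bddAbove
  have hΘ : ∀ T j, c j * ψ T (Bᵀ j) ≤ max Θ₀ 1 :=
    fun T j => (hΘ₀ ⟨(T, j), rfl⟩).trans (le_max_left _ _)
  have hev : ∀ᶠ z in 𝓝 b, ∀ T, B.FormsBasisWith b T → 1 / 2 < ψ T z := by
    refine eventually_all.mpr fun T => ?_
    by_cases hT : B.FormsBasisWith b T
    · refine (continuousAt_const.eventually_lt (ψ T).continuous_of_finiteDimensional.continuousAt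
        ?_).mono fun z hz _ => hz
      rw [(hψ T hT).1]
      norm_num
    · exact Eventually.of_forall fun z h => absurd h hT
  refine ⟨1 / 2 / (Fintype.card ι * max Θ₀ 1), by positivity, ?_⟩
  filter_upwards [hev] with z hz y rfl hy T hT
  have hsum : ψ T (B *ᵥ y) = ∑ j, y j / c j * (c j * ψ T (Bᵀ j)) := by
    rw [mulVec_eq_sum, map_sum]
    refine sum_congr rfl fun j _ => ?_
    rw [op_smul_eq_smul, map_smul, smul_eq_mul]
    field_simp [(hc j).ne']
  obtain ⟨j, hj, hle⟩ := exists_pos_le_of_le_sum_mul (by norm_num)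
    (fun j => div_nonneg (hy j) (hc j).le) (hΘ T) ((hz T hT).le.trans hsum.le)
  refine ⟨j, hle, fun hmem => ?_⟩
  rw [(hψ T hT).2 _ hmem, mul_zero] at hj
  exact lt_irrefl _ hj

lemma tendsto_of_hasDerivWithinAt_sub_self {E : Type*} [NormedAddCommGroup E] [NormedSpace ℝ E]
    {y : ℝ → E} {v : E} (hy : ∀ t ∈ Ici (0 : ℝ), HasDerivWithinAt y (v - y t) (Ici 0) t) :
    Tendsto y atTop (𝓝 v) := by
  have hderiv : ∀ s ∈ Ici (0 : ℝ),
      HasDerivWithinAt (fun s => Real.exp s • (y s - v)) 0 (Ici 0) s := by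
    intro s hs
    have h := (Real.hasDerivAt_exp s).hasDerivWithinAt.smul ((hy s hs).sub_const v)
    rwa [← smul_add, sub_add_sub_cancel', sub_self, smul_zero] at h
  have hsol : ∀ t ∈ Ici (0 : ℝ), y t = v + Real.exp (-t) • (y 0 - v) := by
    intro t ht
    have h := constant_of_has_deriv_right_zero
      (fun s hs => (hderiv s hs.1).continuousWithinAt.mono Icc_subset_Ici_self)
      (fun s hs => (hderiv s hs.1).mono (Ici_subset_Ici.mpr hs.1)) t ⟨ht, le_rfl⟩
    rw [Real.exp_zero, one_smul] at h
    rw [← h, smul_smul, ← Real.exp_add, neg_add_cancel, Real.exp_zero, one_smul,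
      add_sub_cancel]
  have hlim : Tendsto (fun t => v + Real.exp (-t) • (y 0 - v)) atTop (𝓝 v) := by
    simpa using tendsto_const_nhds.add
      (Real.tendsto_exp_neg_atTop_nhds_zero.smul_const (y 0 - v))
  exact hlim.congr' ((eventually_ge_atTop 0).mono fun t ht => (hsol t ht).symm)

lemma exists_forall_norm_le_of_continuousOn_Ici {E : Type*} [NormedAddCommGroup E] {f : ℝ → E}
    {a M : ℝ} (hf : ContinuousOn f (Ici a)) (h : ∀ᶠ t in atTop, ‖f t‖ ≤ M) :
    ∃ C, ∀ t ∈ Ici a, ‖f t‖ ≤ C := by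
  obtain ⟨t₀, ht₀⟩ := eventually_atTop.mp h
  obtain ⟨C, hC⟩ := isCompact_Icc.exists_bound_of_continuousOn
    (hf.mono (Icc_subset_Ici_self : Icc a t₀ ⊆ Ici a))
  refine ⟨max C M, fun t ht => ?_⟩
  rcases le_total t t₀ with hle | hle
  · exact (hC t ⟨ht, hle⟩).trans (le_max_left _ _)
  · exact (ht₀ t hle).trans (le_max_right _ _)

lemma ContinuousOn.matrix_inv_mulVec {κ : Type*} [Fintype κ] [DecidableEq κ] {s : Set ℝ}
    {L : ℝ → Matrix κ κ ℝ} (hL : ContinuousOn L s) (hdet : ∀ t ∈ s, (L t).det ≠ 0)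
    (b : κ → ℝ) : ContinuousOn (fun t => (L t)⁻¹ *ᵥ b) s := by
  intro t ht
  have hinv : ContinuousAt Inv.inv (L t) :=
    continuousAt_matrix_inv _ (by rw [Ring.inverse_eq_inv']; exact continuousAt_inv₀ (hdet t ht))
  exact ((continuous_id.matrix_mulVec continuous_const).continuousAt.comp
    hinv).comp_continuousWithinAt (hL t ht)

namespace IsPhysSolOn

variable {m n : ℕ} {B : Matrix (Fin m) (Fin n) ℝ} {b : Fin m → ℝ} {c : Fin n → ℝ}
  {x : ℝ → Fin n → ℝ} {s : Set ℝ}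

lemma det_pos (hsol : IsPhysSolOn B b c x s) (hB : LinearIndependent ℝ B.row)
    (hc : ∀ i, 0 < c i) {t : ℝ} (ht : t ∈ s) : 0 < (B * physW c (x t) * Bᵀ).det :=
  det_mul_diagonal_mul_transpose_pos hB fun i => div_pos ((hsol t ht).1 i) (hc i)

lemma tendsto_mulVec (hsol : IsPhysSolOn B b c x (Ici 0))
    (hdet : ∀ t ∈ Ici (0 : ℝ), (B * physW c (x t) * Bᵀ).det ≠ 0) :
    Tendsto (fun t => B *ᵥ x t) atTop (𝓝 b) := by
  refine tendsto_of_hasDerivWithinAt_sub_self fun t ht => ?_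
  have h := (LinearMap.toContinuousLinearMap B.mulVecLin).hasFDerivAt.comp_hasDerivWithinAt t
    (hsol t ht).2
  simp only [LinearMap.coe_toContinuousLinearMap', mulVecLin_apply] at h
  rwa [mulVec_sub, physQ, mulVec_mulVec, mulVec_mulVec, mulVec_mulVec,
    mul_nonsing_inv _ (hdet t ht).isUnit, one_mulVec] at h

lemma continuousOn_inv_mulVec (hsol : IsPhysSolOn B b c x s)
    (hdet : ∀ t ∈ s, (B * physW c (x t) * Bᵀ).det ≠ 0) :
    ContinuousOn (fun t => (B * physW c (x t) * Bᵀ)⁻¹ *ᵥ b) s := by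
  have hx : ContinuousOn x s := fun t ht => (hsol t ht).2.continuousWithinAt
  have hW : Continuous fun v : Fin n → ℝ => physW c v :=
    (continuous_pi fun i => (continuous_apply i).div_const (c i)).matrix_diagonal
  have hL : Continuous fun v : Fin n → ℝ => B * physW c v * Bᵀ :=
    (continuous_const.matrix_mul hW).matrix_mul continuous_const
  exact (hL.comp_continuousOn hx).matrix_inv_mulVec hdet b

end IsPhysSolOn

theorem physarum_Atp_uniformly_bounded_general {m n : ℕ} (A : Matrix (Fin m) (Fin n) ℤ)
    (hrank : (rmat A).rank = m)
    (b : Fin m → ℤ) (c : Fin n → ℤ) (hc : ∀ i, 0 < c i)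
    (x : ℝ → Fin n → ℝ)
    (hsol : IsPhysSolOn (rmat A) (fun j => (b j : ℝ)) (fun i => (c i : ℝ)) x (Set.Ici 0))
    (p : ℝ → Fin m → ℝ)
    (hp : ∀ t ∈ Set.Ici (0 : ℝ),
      (rmat A * physW (fun i => (c i : ℝ)) (x t) * (rmat A)ᵀ) *ᵥ p t = fun j => (b j : ℝ)) :
    ∃ M : ℝ, ∀ t ∈ Set.Ici (0 : ℝ), ∀ j, |((rmat A)ᵀ *ᵥ p t) j| ≤ M := by
  rcases isEmpty_or_nonempty (Fin n) with hn | hn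
  · exact ⟨0, fun _ _ j => isEmptyElim j⟩
  have hcR : ∀ i, (0 : ℝ) < c i := fun i => Int.cast_pos.mpr (hc i)
  have hrows := linearIndependent_row_of_rank_eq_card (by rw [hrank, Fintype.card_fin])
  have hdet := fun t (ht : t ∈ Ici (0 : ℝ)) => (hsol.det_pos hrows hcR ht).ne'
  have hpinv : ∀ t ∈ Ici (0 : ℝ),
      p t = (rmat A * physW (fun i => (c i : ℝ)) (x t) * (rmat A)ᵀ)⁻¹ *ᵥ fun j => (b j : ℝ) :=
    fun t ht => by rw [← hp t ht, mulVec_mulVec, nonsing_inv_mul _ (hdet t ht).isUnit, one_mulVec]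
  obtain ⟨ε, hε, hcover⟩ :=
    (rmat A).exists_pos_eventually_nhds_forall_formsBasisWith (fun j => (b j : ℝ)) hcR
  obtain ⟨M, hM⟩ := exists_norm_inv_mulVec_le hrows (fun j => (b j : ℝ)) hε
  obtain ⟨C, hC⟩ := exists_forall_norm_le_of_continuousOn_Ici
    ((hsol.continuousOn_inv_mulVec hdet).congr hpinv) (M := M) <| by
      filter_upwards [(hsol.tendsto_mulVec hdet).eventually hcover, eventually_ge_atTop 0]
        with t ht ht0
      rw [hpinv t ht0]
      exact hM _ (fun i => div_pos ((hsol t ht0).1 i) (hcR i))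
        (ht (x t) rfl fun i => ((hsol t ht0).1 i).le)
  exact (rmat A)ᵀ.exists_forall_abs_mulVec_le hC

theorem physarum_Atp_uniformly_bounded {m n : ℕ} (A : Matrix (Fin m) (Fin n) ℤ)
    (hrank : (rmat A).rank = m)
    (b : Fin m → ℤ) (c : Fin n → ℤ) (hc : ∀ i, 0 < c i)
    (hfeas : ∃ y : Fin n → ℝ, (rmat A *ᵥ y = fun j => (b j : ℝ)) ∧ ∀ i, 0 ≤ y i)
    (x : ℝ → Fin n → ℝ)
    (hsol : IsPhysSolOn (rmat A) (fun j => (b j : ℝ)) (fun i => (c i : ℝ)) x (Set.Ici 0))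
    (p : ℝ → Fin m → ℝ)
    (hp : ∀ t ∈ Set.Ici (0 : ℝ),
      (rmat A * physW (fun i => (c i : ℝ)) (x t) * (rmat A)ᵀ) *ᵥ p t = fun j => (b j : ℝ)) :
    ∃ M : ℝ, ∀ t ∈ Set.Ici (0 : ℝ), ∀ j, |((rmat A)ᵀ *ᵥ p t) j| ≤ M :=
  physarum_Atp_uniformly_bounded_general A hrank b c hc x hsol p hp
end
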